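/- arXiv:1906.10086 — 7 statements merged into one kernel-verified Lean document; each statement's English description precedes it below -/
import Mathlib

section
/- In the one-dimensional split framework, let s* be a best split and suppose Δ(s*) > 0. Then s* ∈ (a,b) and there exists ε ∈ {−1,+1} such that P(s*) = (1/2)·(1 + ε·√(Ḡ(s*)² / (Ḡ(s*)² + Δ(s*)))); consequently 4·P(s*)·(1 − P(s*)) = Δ(s*) / (Ḡ(s*)² + Δ(s*)). -/
/-!
Since `P a = 0` and `P b = 1`, `Δ` vanishes at both endpoints, so a best split with `Δ s* > 0` is
an interior maximum and `Δ' s* = 0`. As `P' = p` and `Ξ' = Ḡ p`, this first-order condition reads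
`2 Ḡ P (1 - P) = Ξ (1 - 2 P)`. Squaring it and substituting `Ξ² = Δ P (1 - P)` gives
`4 P (1 - P) (Ḡ² + Δ) = Δ`, and then `(2 P - 1)² = 1 - 4 P (1 - P) = Ḡ² / (Ḡ² + Δ)`.
-/

open MeasureTheory Set

theorem hasDerivAt_integral_of_continuousOn_Icc {f : ℝ → ℝ} {a b s : ℝ}
    (hf : ContinuousOn f (Icc a b)) (hs : s ∈ Ioo a b) :
    HasDerivAt (fun t => ∫ u in a..t, f u) (f s) s :=
  intervalIntegral.integral_hasDerivAt_right
    ((hf.mono (uIcc_of_le hs.1.le ▸ Icc_subset_Icc_right hs.2.le)).intervalIntegrable)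
    ((hf.mono Ioo_subset_Icc_self).stronglyMeasurableAtFilter isOpen_Ioo s hs)
    (hf.continuousAt (Icc_mem_nhds hs.1 hs.2))

theorem IsLocalMax.sq_div_mul_one_sub_first_order {P X : ℝ → ℝ} {s π γ : ℝ}
    (hmax : IsLocalMax (fun t => X t ^ 2 / (P t * (1 - P t))) s)
    (hP : HasDerivAt P π s) (hX : HasDerivAt X (γ * π) s) (hπ : π ≠ 0) (hX0 : X s ≠ 0)
    (hQ : P s * (1 - P s) ≠ 0) :
    2 * γ * (P s * (1 - P s)) = X s * (1 - 2 * P s) := by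
  have hderiv := (hX.fun_pow 2).fun_div (hP.fun_mul ((hasDerivAt_const s 1).fun_sub hP)) hQ
  have hzero := hmax.hasDerivAt_eq_zero hderiv
  rw [div_eq_zero_iff, or_iff_left (pow_ne_zero 2 hQ)] at hzero
  have hfactored : π * X s * (2 * γ * (P s * (1 - P s)) - X s * (1 - 2 * P s)) = 0 := by
    linear_combination hzero
  rcases mul_eq_zero.mp hfactored with h | h
  · exact absurd h (mul_ne_zero hπ hX0)
  · linarith

theorem four_mul_mul_one_sub_eq_div_of_first_order {P X G D : ℝ} (hQ : 0 < P * (1 - P))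
    (hD : 0 < D) (hX : X ^ 2 = D * (P * (1 - P)))
    (hfoc : 2 * G * (P * (1 - P)) = X * (1 - 2 * P)) :
    4 * P * (1 - P) = D / (G ^ 2 + D) := by
  have hsq : 4 * G ^ 2 * (P * (1 - P)) = D * (1 - 2 * P) ^ 2 := by
    refine mul_right_cancel₀ hQ.ne' ?_
    linear_combination (2 * G * (P * (1 - P)) + X * (1 - 2 * P)) * hfoc + (1 - 2 * P) ^ 2 * hX
  rw [eq_div_iff (by positivity)]
  linear_combination hsq

theorem exists_eq_sign_mul_sqrt_of_sq_eq {x y : ℝ} (h : x ^ 2 = y) :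
    ∃ ε : ℝ, (ε = 1 ∨ ε = -1) ∧ x = ε * √y := by
  rw [← h, Real.sqrt_sq_eq_abs]
  rcases le_or_gt 0 x with hx | hx
  · exact ⟨1, Or.inl rfl, by rw [abs_of_nonneg hx, one_mul]⟩
  · exact ⟨-1, Or.inr rfl, by rw [abs_of_neg hx]; ring⟩

theorem best_split_probability_content_general
    (a b : ℝ)
    (p g : ℝ → ℝ)
    (hp_cont : ContinuousOn p (Set.Icc a b))
    (hp_pos : ∀ u ∈ Set.Icc a b, 0 < p u)
    (hp_one : (∫ u in a..b, p u) = 1)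
    (hg_cont : ContinuousOn g (Set.Icc a b))
    (P M Xi G Δ : ℝ → ℝ)
    (hP : ∀ s, P s = ∫ u in a..s, p u)
    (hM : ∀ s, M s = ∫ u in a..s, g u * p u)
    (hXi : ∀ s, Xi s = M s - M b * P s)
    (hG : ∀ s, G s = g s - M b)
    (hΔ : ∀ s, Δ s = Xi s ^ 2 / (P s * (1 - P s)))
    (sstar : ℝ) (hmem : sstar ∈ Set.Icc a b)
    (hmax : ∀ s ∈ Set.Icc a b, Δ s ≤ Δ sstar)
    (hpos : 0 < Δ sstar) :
    sstar ∈ Set.Ioo a b ∧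
      ∃ ε : ℝ, (ε = 1 ∨ ε = -1) ∧
        P sstar = (1 + ε * Real.sqrt (G sstar ^ 2 / (G sstar ^ 2 + Δ sstar))) / 2 ∧
        4 * P sstar * (1 - P sstar) = Δ sstar / (G sstar ^ 2 + Δ sstar) := by
  have hPa : P a = 0 := by simp [hP]
  have hPb : P b = 1 := by rw [hP, hp_one]
  have hs : sstar ∈ Ioo a b := by
    refine ⟨hmem.1.lt_of_ne ?_, hmem.2.lt_of_ne ?_⟩ <;> rintro rfl <;> simp [hΔ, hPa, hPb] at hpos
  obtain ⟨hX0, hQ⟩ : 0 < Xi sstar ^ 2 ∧ 0 < P sstar * (1 - P sstar) :=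
    (div_pos_iff.mp (hΔ sstar ▸ hpos)).resolve_right fun h => (sq_nonneg _).not_gt h.1
  have hdP : HasDerivAt P (p sstar) sstar := by
    simpa only [← funext hP] using hasDerivAt_integral_of_continuousOn_Icc hp_cont hs
  have hdXi : HasDerivAt Xi (G sstar * p sstar) sstar := by
    have hdM : HasDerivAt M (g sstar * p sstar) sstar := by
      simpa only [← funext hM] using
        hasDerivAt_integral_of_continuousOn_Icc (hg_cont.fun_mul hp_cont) hs
    rw [funext hXi, hG, sub_mul]
    exact hdM.sub (hdP.const_mul (M b))
  have hloc : IsLocalMax Δ sstar := Filter.eventually_of_mem (Icc_mem_nhds hs.1 hs.2) hmax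
  rw [funext hΔ] at hloc
  have hfoc := hloc.sq_div_mul_one_sub_first_order hdP hdXi (hp_pos sstar hmem).ne'
    ((pow_ne_zero_iff two_ne_zero).mp hX0.ne') hQ.ne'
  have h4 := four_mul_mul_one_sub_eq_div_of_first_order hQ hpos
    (by rw [hΔ, div_mul_cancel₀ _ hQ.ne']) hfoc
  have hsq : (2 * P sstar - 1) ^ 2 = G sstar ^ 2 / (G sstar ^ 2 + Δ sstar) := by
    have hS : G sstar ^ 2 + Δ sstar ≠ 0 := by positivity
    rw [eq_div_iff hS]
    linear_combination -(eq_div_iff hS).mp h4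
  obtain ⟨ε, hε, h2P⟩ := exists_eq_sign_mul_sqrt_of_sq_eq hsq
  exact ⟨hs, ε, hε, by linarith, h4⟩

/-- In the one-dimensional split framework, a best split `s*` with
`Δ(s*) > 0` lies in the open interval `(a,b)`, and
`P(s*) = (1 ± √(Ḡ(s*)² / (Ḡ(s*)² + Δ(s*))))/2`; consequently
`4 P(s*)(1 − P(s*)) = Δ(s*)/(Ḡ(s*)² + Δ(s*))`. -/
theorem best_split_probability_content
    (a b : ℝ) (hab : a < b)
    (p g : ℝ → ℝ)
    (hp_cont : ContinuousOn p (Set.Icc a b))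
    (hp_pos : ∀ u ∈ Set.Icc a b, 0 < p u)
    (hp_one : (∫ u in a..b, p u) = 1)
    (hg_cont : ContinuousOn g (Set.Icc a b))
    (P M Xi G Δ : ℝ → ℝ)
    (hP : ∀ s, P s = ∫ u in a..s, p u)
    (hM : ∀ s, M s = ∫ u in a..s, g u * p u)
    (hXi : ∀ s, Xi s = M s - M b * P s)
    (hG : ∀ s, G s = g s - M b)
    (hΔ : ∀ s, Δ s = Xi s ^ 2 / (P s * (1 - P s)))
    (sstar : ℝ) (hmem : sstar ∈ Set.Icc a b)
    (hmax : ∀ s ∈ Set.Icc a b, Δ s ≤ Δ sstar)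
    (hpos : 0 < Δ sstar) :
    sstar ∈ Set.Ioo a b ∧
      ∃ ε : ℝ, (ε = 1 ∨ ε = -1) ∧
        P sstar = (1 + ε * Real.sqrt (G sstar ^ 2 / (G sstar ^ 2 + Δ sstar))) / 2 ∧
        4 * P sstar * (1 - P sstar) = Δ sstar / (G sstar ^ 2 + Δ sstar) :=
  best_split_probability_content_general a b p g hp_cont hp_pos hp_one hg_cont P M Xi G Δ hP hM hXi
    hG hΔ sstar hmem hmax hpos
end

section
/- In the one-dimensional split framework, let s* be a best split with Δ(s*) > 0, and let ω = sup_{s,s' ∈ [a,b]} |g(s) − g(s')| be the oscillation of g on [a,b]. Then 4·P(s*)·(1 − P(s*)) ≥ Δ(s*)/ω², and both P(s*) and 1 − P(s*) lie in the closed interval [(1 − √(1 − Δ(s*)/ω²))/2, (1 + √(1 − Δ(s*)/ω²))/2]. -/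
/-!
Write `P = P(s)`, `m` for the node mean and `lo ≤ g ≤ hi` for the extreme values of `g` on
`[a,b]`, so that `hi - lo ≤ ω`. Since `Ξ(s) = (1 - P) M(s) - P (m - M(s))` and the two daughter
masses satisfy `M(s) ∈ [lo P, hi P]` and `m - M(s) ∈ [lo (1 - P), hi (1 - P)]`, one gets
`|Ξ(s)| ≤ ω P (1 - P)`, hence `Δ(s) ≤ ω² P (1 - P)` at every split point.
The interval bounds then come from `4 P (1 - P) = 1 - (2 P - 1)²`.
-/

open MeasureTheory Set

theorem IsCompact.exists_mapsTo_Icc_sub_le_sSup_abs_sub {g : ℝ → ℝ} {K : Set ℝ}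
    (hK : IsCompact K) (hne : K.Nonempty) (hg : ContinuousOn g K) :
    ∃ lo hi, MapsTo g K (Icc lo hi) ∧
      hi - lo ≤ sSup ((fun q : ℝ × ℝ => |g q.1 - g q.2|) '' (K ×ˢ K)) := by
  obtain ⟨x₀, hx₀, hmin⟩ := hK.exists_isMinOn hne hg
  obtain ⟨x₁, hx₁, hmax⟩ := hK.exists_isMaxOn hne hg
  have hbdd : BddAbove ((fun q : ℝ × ℝ => |g q.1 - g q.2|) '' (K ×ˢ K)) :=
    (hK.prod hK).bddAbove_image <|
      ((hg.comp continuousOn_fst fun _ hq => hq.1).sub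
        (hg.comp continuousOn_snd fun _ hq => hq.2)).abs
  refine ⟨g x₀, g x₁, fun u hu => ⟨hmin hu, hmax hu⟩, ?_⟩
  exact (le_abs_self _).trans (le_csSup hbdd ⟨(x₁, x₀), ⟨hx₁, hx₀⟩, rfl⟩)

theorem intervalIntegral.integral_mul_mem_Icc_of_mapsTo {p g : ℝ → ℝ} {c d lo hi : ℝ}
    (hcd : c ≤ d) (hp : ContinuousOn p (Icc c d)) (hg : ContinuousOn g (Icc c d))
    (hp_nonneg : ∀ u ∈ Icc c d, 0 ≤ p u) (hg_mem : MapsTo g (Icc c d) (Icc lo hi)) :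
    ∫ u in c..d, g u * p u ∈ Icc (lo * ∫ u in c..d, p u) (hi * ∫ u in c..d, p u) := by
  have hpI := hp.intervalIntegrable_of_Icc (μ := volume) hcd
  have hgpI := (hg.mul hp).intervalIntegrable_of_Icc (μ := volume) hcd
  rw [← intervalIntegral.integral_const_mul, ← intervalIntegral.integral_const_mul]
  exact ⟨intervalIntegral.integral_mono_on hcd (hpI.const_mul lo) hgpI fun u hu =>
      mul_le_mul_of_nonneg_right (hg_mem hu).1 (hp_nonneg u hu),
    intervalIntegral.integral_mono_on hcd hgpI (hpI.const_mul hi) fun u hu =>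
      mul_le_mul_of_nonneg_right (hg_mem hu).2 (hp_nonneg u hu)⟩

theorem abs_mul_sub_mul_le_of_mem_Icc {L R P Q lo hi : ℝ} (hP : 0 ≤ P) (hQ : 0 ≤ Q)
    (hL : L ∈ Icc (lo * P) (hi * P)) (hR : R ∈ Icc (lo * Q) (hi * Q)) :
    |L * Q - R * P| ≤ (hi - lo) * (P * Q) := by
  obtain ⟨hL₁, hL₂⟩ := hL
  obtain ⟨hR₁, hR₂⟩ := hR
  rw [abs_le]
  constructor <;> nlinarith [mul_le_mul_of_nonneg_right hL₁ hQ, mul_le_mul_of_nonneg_right hL₂ hQ,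
    mul_le_mul_of_nonneg_right hR₁ hP, mul_le_mul_of_nonneg_right hR₂ hP]

section Split

variable {a b s : ℝ} {p g : ℝ → ℝ}

theorem intervalIntegral_mem_Icc_zero_one_of_integral_eq_one (hs : s ∈ Icc a b)
    (hp : ContinuousOn p (Icc a b)) (hp_nonneg : ∀ u ∈ Icc a b, 0 ≤ p u) (hp_one : ∫ u in a..b, p u = 1) :
    ∫ u in a..s, p u ∈ Icc 0 1 := by
  have hsplit := intervalIntegral.integral_add_adjacent_intervals
    ((hp.mono (Icc_subset_Icc_right hs.2)).intervalIntegrable_of_Icc (μ := volume) hs.1)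
    ((hp.mono (Icc_subset_Icc_left hs.1)).intervalIntegrable_of_Icc (μ := volume) hs.2)
  have hleft : 0 ≤ ∫ u in a..s, p u := intervalIntegral.integral_nonneg hs.1 fun u hu =>
    hp_nonneg u ⟨hu.1, hu.2.trans hs.2⟩
  have hright : 0 ≤ ∫ u in s..b, p u := intervalIntegral.integral_nonneg hs.2 fun u hu =>
    hp_nonneg u ⟨hs.1.trans hu.1, hu.2⟩
  exact ⟨hleft, by linarith⟩

theorem abs_split_contrast_le {lo hi : ℝ} (hs : s ∈ Icc a b) (hp : ContinuousOn p (Icc a b))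
    (hg : ContinuousOn g (Icc a b)) (hp_nonneg : ∀ u ∈ Icc a b, 0 ≤ p u)
    (hp_one : ∫ u in a..b, p u = 1) (hg_mem : MapsTo g (Icc a b) (Icc lo hi)) :
    |(∫ u in a..s, g u * p u) - (∫ u in a..b, g u * p u) * ∫ u in a..s, p u| ≤
      (hi - lo) * ((∫ u in a..s, p u) * (1 - ∫ u in a..s, p u)) := by
  have hleft : Icc a s ⊆ Icc a b := Icc_subset_Icc_right hs.2
  have hright : Icc s b ⊆ Icc a b := Icc_subset_Icc_left hs.1
  have hsplit_p := intervalIntegral.integral_add_adjacent_intervals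
    ((hp.mono hleft).intervalIntegrable_of_Icc (μ := volume) hs.1)
    ((hp.mono hright).intervalIntegrable_of_Icc (μ := volume) hs.2)
  have hsplit_gp : (∫ u in a..s, g u * p u) + ∫ u in s..b, g u * p u = ∫ u in a..b, g u * p u :=
    intervalIntegral.integral_add_adjacent_intervals
      (((hg.mul hp).mono hleft).intervalIntegrable_of_Icc hs.1)
      (((hg.mul hp).mono hright).intervalIntegrable_of_Icc hs.2)
  have hP := intervalIntegral_mem_Icc_zero_one_of_integral_eq_one hs hp hp_nonneg hp_one
  have hQ : 1 - ∫ u in a..s, p u = ∫ u in s..b, p u := by linarith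
  have hL := intervalIntegral.integral_mul_mem_Icc_of_mapsTo hs.1 (hp.mono hleft)
    (hg.mono hleft) (fun u hu => hp_nonneg u (hleft hu)) (hg_mem.mono_left hleft)
  have hR := intervalIntegral.integral_mul_mem_Icc_of_mapsTo hs.2 (hp.mono hright)
    (hg.mono hright) (fun u hu => hp_nonneg u (hright hu)) (hg_mem.mono_left hright)
  rw [← hQ] at hR
  have key := abs_mul_sub_mul_le_of_mem_Icc hP.1 (sub_nonneg.2 hP.2) hL hR
  rw [← hsplit_gp]
  convert key using 2
  ring

end Split

theorem div_sq_le_of_abs_le_mul {X ω D : ℝ} (hD : 0 ≤ D) (hX : |X| ≤ ω * D) :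
    X ^ 2 / D ≤ ω ^ 2 * D := by
  rcases hD.eq_or_lt with rfl | hD
  · simp
  rw [div_le_iff₀ hD, ← sq_abs X]
  calc |X| ^ 2 ≤ (ω * D) ^ 2 := pow_le_pow_left₀ (abs_nonneg X) hX 2
    _ = ω ^ 2 * D * D := by ring

theorem mem_Icc_of_le_four_mul_mul_one_sub {x δ : ℝ} (h : δ ≤ 4 * x * (1 - x)) :
    x ∈ Icc ((1 - √(1 - δ)) / 2) ((1 + √(1 - δ)) / 2) := by
  have h' : |2 * x - 1| ≤ √(1 - δ) := Real.abs_le_sqrt (by nlinarith)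
  obtain ⟨h₁, h₂⟩ := abs_le.1 h'
  constructor <;> linarith

theorem best_split_daughter_probability_bounds_general
    (a b : ℝ)
    (p g : ℝ → ℝ)
    (hp_cont : ContinuousOn p (Set.Icc a b))
    (hp_pos : ∀ u ∈ Set.Icc a b, 0 < p u)
    (hp_one : (∫ u in a..b, p u) = 1)
    (hg_cont : ContinuousOn g (Set.Icc a b))
    (P M Xi Δ : ℝ → ℝ)
    (hP : ∀ s, P s = ∫ u in a..s, p u)
    (hM : ∀ s, M s = ∫ u in a..s, g u * p u)
    (hXi : ∀ s, Xi s = M s - M b * P s)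
    (hΔ : ∀ s, Δ s = Xi s ^ 2 / (P s * (1 - P s)))
    (sstar : ℝ) (hmem : sstar ∈ Set.Icc a b)
    (ω : ℝ) (hω : ω = sSup ((fun q : ℝ × ℝ => |g q.1 - g q.2|) '' (Set.Icc a b ×ˢ Set.Icc a b))) :
    Δ sstar / ω ^ 2 ≤ 4 * P sstar * (1 - P sstar) ∧
    P sstar ∈ Set.Icc ((1 - Real.sqrt (1 - Δ sstar / ω ^ 2)) / 2)
      ((1 + Real.sqrt (1 - Δ sstar / ω ^ 2)) / 2) ∧
    (1 - P sstar) ∈ Set.Icc ((1 - Real.sqrt (1 - Δ sstar / ω ^ 2)) / 2)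
      ((1 + Real.sqrt (1 - Δ sstar / ω ^ 2)) / 2) := by
  have hp_nonneg : ∀ u ∈ Icc a b, 0 ≤ p u := fun u hu => (hp_pos u hu).le
  obtain ⟨lo, hi, hg_mem, hosc⟩ :=
    isCompact_Icc.exists_mapsTo_Icc_sub_le_sSup_abs_sub ⟨sstar, hmem⟩ hg_cont
  rw [← hω] at hosc
  have hP01 : P sstar ∈ Icc 0 1 :=
    hP sstar ▸ intervalIntegral_mem_Icc_zero_one_of_integral_eq_one hmem hp_cont hp_nonneg hp_one
  have hvar : 0 ≤ P sstar * (1 - P sstar) := mul_nonneg hP01.1 (sub_nonneg.2 hP01.2)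
  have hXi_le : |Xi sstar| ≤ ω * (P sstar * (1 - P sstar)) := by
    have h := abs_split_contrast_le hmem hp_cont hg_cont hp_nonneg hp_one hg_mem
    rw [← hP, ← hM, ← hM, ← hXi] at h
    exact h.trans (mul_le_mul_of_nonneg_right hosc hvar)
  have hΔ_le : Δ sstar ≤ ω ^ 2 * (P sstar * (1 - P sstar)) :=
    hΔ sstar ▸ div_sq_le_of_abs_le_mul hvar hXi_le
  have hfirst : Δ sstar / ω ^ 2 ≤ 4 * P sstar * (1 - P sstar) := by
    refine (div_le_of_le_mul₀ (sq_nonneg ω) hvar ?_).trans (by linarith)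
    linarith
  refine ⟨hfirst, mem_Icc_of_le_four_mul_mul_one_sub hfirst,
    mem_Icc_of_le_four_mul_mul_one_sub ?_⟩
  linarith

/-- For a best split `s*` with `Δ(s*) > 0` and `ω` the oscillation of `g`
on `[a,b]`: `4 P(s*)(1 − P(s*)) ≥ Δ(s*)/ω²` and both `P(s*)` and `1 − P(s*)` lie in
`[(1 − √(1 − Δ(s*)/ω²))/2, (1 + √(1 − Δ(s*)/ω²))/2]`. -/
theorem best_split_daughter_probability_bounds
    (a b : ℝ) (hab : a < b)
    (p g : ℝ → ℝ)
    (hp_cont : ContinuousOn p (Set.Icc a b))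
    (hp_pos : ∀ u ∈ Set.Icc a b, 0 < p u)
    (hp_one : (∫ u in a..b, p u) = 1)
    (hg_cont : ContinuousOn g (Set.Icc a b))
    (P M Xi G Δ : ℝ → ℝ)
    (hP : ∀ s, P s = ∫ u in a..s, p u)
    (hM : ∀ s, M s = ∫ u in a..s, g u * p u)
    (hXi : ∀ s, Xi s = M s - M b * P s)
    (hG : ∀ s, G s = g s - M b)
    (hΔ : ∀ s, Δ s = Xi s ^ 2 / (P s * (1 - P s)))
    (sstar : ℝ) (hmem : sstar ∈ Set.Icc a b)
    (hmax : ∀ s ∈ Set.Icc a b, Δ s ≤ Δ sstar)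
    (hpos : 0 < Δ sstar)
    (ω : ℝ) (hω : ω = sSup ((fun q : ℝ × ℝ => |g q.1 - g q.2|) '' (Set.Icc a b ×ˢ Set.Icc a b))) :
    Δ sstar / ω ^ 2 ≤ 4 * P sstar * (1 - P sstar) ∧
    P sstar ∈ Set.Icc ((1 - Real.sqrt (1 - Δ sstar / ω ^ 2)) / 2)
      ((1 + Real.sqrt (1 - Δ sstar / ω ^ 2)) / 2) ∧
    (1 - P sstar) ∈ Set.Icc ((1 - Real.sqrt (1 - Δ sstar / ω ^ 2)) / 2)
      ((1 + Real.sqrt (1 - Δ sstar / ω ^ 2)) / 2) :=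
  best_split_daughter_probability_bounds_general a b p g hp_cont hp_pos hp_one hg_cont P M Xi Δ hP
    hM hXi hΔ sstar hmem ω hω
end

section
/- In the one-dimensional split framework, suppose in addition that p and g are continuously differentiable on [a,b], and let s* be a best split with Δ(s*) > 0. Then Ḡ(s*)² + Δ(s*) ≤ (|g′(s*)| / p(s*)) · √(P(s*)·(1 − P(s*))·Δ(s*)). -/
open MeasureTheory Set

noncomputable section

/-!
Write `Q = P (1 - P)` and `D = Δ(s*)`. As `s*` maximises `Δ = Ξ² / Q`, the function
`φ = D Q - Ξ²` has a local minimum `0` at `s*`. Its derivative factors as `φ' = p ψ` with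
`ψ = D (1 - 2P) - 2 Ξ Ḡ`; since `p > 0`, `ψ` vanishes at `s*` and cannot decrease there (else `φ`
would decrease just right of `s*`), so `0 ≤ ψ'(s*) = -2 ((Ḡ² + D) p + Ξ g')`. Hence
`(Ḡ² + D) p ≤ -Ξ g' ≤ |g'| |Ξ| = |g'| √(Q D)`.
-/

open Filter Topology

theorem hasDerivAt_intervalIntegral_of_continuousOn {E : Type*} [NormedAddCommGroup E]
    [NormedSpace ℝ E] [CompleteSpace E] {f : ℝ → E} {a b x : ℝ}
    (hf : ContinuousOn f (Icc a b)) (hx : x ∈ Ioo a b) :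
    HasDerivAt (fun t => ∫ u in a..t, f u) (f x) x :=
  intervalIntegral.integral_hasDerivAt_right
    ((hf.mono (Icc_subset_Icc_right hx.2.le)).intervalIntegrable_of_Icc hx.1.le)
    ((hf.mono Ioo_subset_Icc_self).stronglyMeasurableAtFilter isOpen_Ioo x hx)
    (hf.continuousAt (Icc_mem_nhds hx.1 hx.2))

theorem IsLocalMax.isLocalMin_div_mul_sub {u v : ℝ → ℝ} {x : ℝ}
    (hmax : IsLocalMax (fun y => u y / v y) x) (hv : ContinuousAt v x) (hvx : 0 < v x) :
    IsLocalMin (fun y => u x / v x * v y - u y) x := by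
  filter_upwards [hmax, hv.eventually (eventually_gt_nhds hvx)] with y hy hvy
  rw [div_mul_cancel₀ _ hvx.ne', sub_self, sub_nonneg, ← div_le_iff₀ hvy]
  exact hy

theorem IsLocalMin.nonneg_of_hasDerivAt_mul {f w ψ : ℝ → ℝ} {x c : ℝ} (hmin : IsLocalMin f x)
    (hf : ∀ᶠ y in 𝓝 x, HasDerivAt f (w y * ψ y) y) (hw : ∀ᶠ y in 𝓝 x, 0 < w y)
    (hψ : HasDerivAt ψ c x) : 0 ≤ c := by
  by_contra! hc
  have hψx : ψ x = 0 :=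
    (mul_eq_zero.mp (hmin.hasDerivAt_eq_zero hf.self_of_nhds)).resolve_left hw.self_of_nhds.ne'
  have hψ_neg : ∀ᶠ y in 𝓝[>] x, ψ y < 0 := by
    have hslope := (hasDerivAt_iff_tendsto_slope.mp hψ).mono_left (nhdsGT_le_nhdsNE x)
    filter_upwards [hslope.eventually (eventually_lt_nhds hc), self_mem_nhdsWithin]
      with y hy (hxy : x < y)
    rw [slope_def_field, hψx, sub_zero] at hy
    exact ((div_neg_iff.mp hy).resolve_left fun h => h.2.not_gt (sub_pos.mpr hxy)).1
  obtain ⟨u, hxu, hu⟩ := mem_nhdsGT_iff_exists_Ioc_subset.mp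
    (hψ_neg.and (nhdsWithin_le_nhds (hf.and (hw.and hmin))))
  have hf_cont : ContinuousOn f (Icc x u) := by
    intro y hy
    rcases hy.1.eq_or_lt with rfl | hxy
    · exact hf.self_of_nhds.continuousAt.continuousWithinAt
    · exact (hu ⟨hxy, hy.2⟩).2.1.continuousAt.continuousWithinAt
  obtain ⟨y, hy, hslope⟩ := exists_hasDerivAt_eq_slope f (fun y => w y * ψ y) hxu hf_cont
    fun y hy => (hu (Ioo_subset_Ioc_self hy)).2.1
  obtain ⟨hψy, -, hwy, -⟩ := hu (Ioo_subset_Ioc_self hy)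
  have hfu : f x ≤ f u := (hu (right_mem_Ioc.mpr hxu)).2.2.2
  have : 0 ≤ w y * ψ y := hslope ▸ div_nonneg (sub_nonneg.mpr hfu) (sub_nonneg.mpr hxu.le)
  nlinarith

theorem split_second_order_condition {P Ξ p g : ℝ → ℝ} {m g₁ x : ℝ}
    (hP : ∀ᶠ y in 𝓝 x, HasDerivAt P (p y) y)
    (hΞ : ∀ᶠ y in 𝓝 x, HasDerivAt Ξ ((g y - m) * p y) y)
    (hg : HasDerivAt g g₁ x) (hp : ∀ᶠ y in 𝓝 x, 0 < p y)
    (hmax : IsLocalMax (fun y => Ξ y ^ 2 / (P y * (1 - P y))) x)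
    (hQ : 0 < P x * (1 - P x)) :
    ((g x - m) ^ 2 + Ξ x ^ 2 / (P x * (1 - P x))) * p x ≤ -(Ξ x * g₁) := by
  set D := Ξ x ^ 2 / (P x * (1 - P x))
  have hPx := hP.self_of_nhds
  have hmin := hmax.isLocalMin_div_mul_sub
    (hPx.continuousAt.mul (continuousAt_const.sub hPx.continuousAt)) hQ
  have hφ : ∀ᶠ y in 𝓝 x, HasDerivAt (fun y => D * (P y * (1 - P y)) - Ξ y ^ 2)
      (p y * (D * (1 - 2 * P y) - 2 * Ξ y * (g y - m))) y := by
    filter_upwards [hP, hΞ] with y hPy hΞy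
    exact (((hPy.mul (hPy.const_sub 1)).const_mul D).sub (hΞy.pow 2)).congr_deriv (by ring)
  have hψ : HasDerivAt (fun y => D * (1 - 2 * P y) - 2 * Ξ y * (g y - m))
      (-2 * (((g x - m) ^ 2 + D) * p x + Ξ x * g₁)) x :=
    ((((hPx.const_mul 2).const_sub 1).const_mul D).sub
      ((hΞ.self_of_nhds.const_mul 2).mul (hg.sub_const m))).congr_deriv (by ring)
  linarith [hmin.nonneg_of_hasDerivAt_mul hφ hp hψ]

theorem best_split_second_order_bound_general
    (a b : ℝ)
    (p g : ℝ → ℝ)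
    (hp_cont : ContinuousOn p (Set.Icc a b))
    (hp_pos : ∀ u ∈ Set.Icc a b, 0 < p u)
    (hp_one : (∫ u in a..b, p u) = 1)
    (hg_cont : ContinuousOn g (Set.Icc a b))
    (g' : ℝ → ℝ)
    (hg' : ∀ s ∈ Set.Icc a b, HasDerivWithinAt g (g' s) (Set.Icc a b) s)
    (P M Xi G Δ : ℝ → ℝ)
    (hP : ∀ s, P s = ∫ u in a..s, p u)
    (hM : ∀ s, M s = ∫ u in a..s, g u * p u)
    (hXi : ∀ s, Xi s = M s - M b * P s)
    (hG : ∀ s, G s = g s - M b)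
    (hΔ : ∀ s, Δ s = Xi s ^ 2 / (P s * (1 - P s)))
    (sstar : ℝ) (hmem : sstar ∈ Set.Icc a b)
    (hmax : ∀ s ∈ Set.Icc a b, Δ s ≤ Δ sstar)
    (hpos : 0 < Δ sstar) :
    G sstar ^ 2 + Δ sstar ≤
      |g' sstar| / p sstar * Real.sqrt (P sstar * (1 - P sstar) * Δ sstar) := by
  have hQ : 0 < P sstar * (1 - P sstar) := by
    rw [hΔ] at hpos
    exact ((div_pos_iff.mp hpos).resolve_right fun h => (sq_nonneg _).not_gt h.1).2
  have hs : sstar ∈ Ioo a b := by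
    refine ⟨hmem.1.lt_of_ne ?_, hmem.2.lt_of_ne ?_⟩ <;> rintro rfl
    · simp [hP] at hQ
    · simp [hP, hp_one] at hQ
  have hnhds : Icc a b ∈ 𝓝 sstar := Icc_mem_nhds hs.1 hs.2
  have hPd : ∀ y ∈ Ioo a b, HasDerivAt P (p y) y := fun y hy =>
    funext hP ▸ hasDerivAt_intervalIntegral_of_continuousOn hp_cont hy
  have hMd : ∀ y ∈ Ioo a b, HasDerivAt M (g y * p y) y := fun y hy =>
    funext hM ▸ hasDerivAt_intervalIntegral_of_continuousOn (f := fun u => g u * p u)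
      (hg_cont.mul hp_cont) hy
  have hXid : ∀ y ∈ Ioo a b, HasDerivAt Xi ((g y - M b) * p y) y := fun y hy =>
    funext hXi ▸ ((hMd y hy).sub ((hPd y hy).const_mul (M b))).congr_deriv (by ring)
  have hIoo : Ioo a b ∈ 𝓝 sstar := Ioo_mem_nhds hs.1 hs.2
  have hkey := split_second_order_condition
    (eventually_of_mem hIoo hPd) (eventually_of_mem hIoo hXid)
    ((hg' sstar hmem).hasDerivAt hnhds) (eventually_of_mem hnhds hp_pos)
    ((funext hΔ ▸ isMaxOn_iff.mpr hmax).isLocalMax hnhds) hQ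
  rw [← hΔ, ← hG] at hkey
  have hp := hp_pos sstar hmem
  have hXi_sq : Xi sstar ^ 2 = P sstar * (1 - P sstar) * Δ sstar := by
    rw [hΔ, mul_div_cancel₀ _ hQ.ne']
  calc G sstar ^ 2 + Δ sstar ≤ -(Xi sstar * g' sstar) / p sstar := (le_div_iff₀ hp).mpr hkey
    _ ≤ |Xi sstar| * |g' sstar| / p sstar := by
      gcongr; rw [← abs_mul]; exact neg_le_abs _
    _ = |g' sstar| / p sstar * Real.sqrt (P sstar * (1 - P sstar) * Δ sstar) := by
      rw [← hXi_sq, Real.sqrt_sq_eq_abs]; ring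

/-- If `p` and `g` are `C¹` on `[a,b]` and `s*` is a best split with
`Δ(s*) > 0`, then `Ḡ(s*)² + Δ(s*) ≤ (|g′(s*)|/p(s*))·√(P(s*)(1 − P(s*))Δ(s*))`. -/
theorem best_split_second_order_bound
    (a b : ℝ) (hab : a < b)
    (p g : ℝ → ℝ)
    (hp_cont : ContinuousOn p (Set.Icc a b))
    (hp_pos : ∀ u ∈ Set.Icc a b, 0 < p u)
    (hp_one : (∫ u in a..b, p u) = 1)
    (hg_cont : ContinuousOn g (Set.Icc a b))
    (p' g' : ℝ → ℝ)
    (hp' : ∀ s ∈ Set.Icc a b, HasDerivWithinAt p (p' s) (Set.Icc a b) s)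
    (hp'_cont : ContinuousOn p' (Set.Icc a b))
    (hg' : ∀ s ∈ Set.Icc a b, HasDerivWithinAt g (g' s) (Set.Icc a b) s)
    (hg'_cont : ContinuousOn g' (Set.Icc a b))
    (P M Xi G Δ : ℝ → ℝ)
    (hP : ∀ s, P s = ∫ u in a..s, p u)
    (hM : ∀ s, M s = ∫ u in a..s, g u * p u)
    (hXi : ∀ s, Xi s = M s - M b * P s)
    (hG : ∀ s, G s = g s - M b)
    (hΔ : ∀ s, Δ s = Xi s ^ 2 / (P s * (1 - P s)))
    (sstar : ℝ) (hmem : sstar ∈ Set.Icc a b)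
    (hmax : ∀ s ∈ Set.Icc a b, Δ s ≤ Δ sstar)
    (hpos : 0 < Δ sstar) :
    G sstar ^ 2 + Δ sstar ≤
      |g' sstar| / p sstar * Real.sqrt (P sstar * (1 - P sstar) * Δ sstar) :=
  best_split_second_order_bound_general a b p g hp_cont hp_pos hp_one hg_cont g' hg' P M Xi G Δ hP
    hM hXi hG hΔ sstar hmem hmax hpos
end
end

section
/- In the multivariate node framework, suppose Assumption (A2) holds with constant η ∈ (0,1]. Let [0,1]^d = t⁰ ⊃ t¹ ⊃ ⋯ ⊃ t^K be a split chain with coordinates j_k and split points s_k, and fix a coordinate j. Then the marginal probability satisfies μ({x ∈ [0,1]^d : a_j(t^K) ≤ x_j ≤ b_j(t^K)}) ≤ exp( −(η/4) · Σ_{k < K, j_k = j} Δ(j, s_k; t^k) / (Δ(j, s_k; t^k) + Ḡ_j(s_k; t^k)²) ), where a summand is interpreted as 0 whenever Δ(j, s_k; t^k) = 0. -/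
/-!
Write `W s = μ(t_L)` and `H s = ∫_{t_L} (f - E_μ[f|t]) dμ` as functions of the split point `s`
along coordinate `j`. By Fubini both are primitives of slice integrals, `W' = w` and
`H' = w · Ḡ_j(s;t)`, and `Δ(j,s;t) = H² / (W (μ(t) - W))`. At an interior maximiser the
first-order condition `2 H' W (μ(t) - W) = H W' (μ(t) - 2 W)` turns `Δ + Ḡ²` into
`H² μ(t)² / (4 W² (μ(t) - W)²)`, whence `Δ / (Δ + Ḡ²) ≤ 4 P (1 - P)` with `P = P_j(s|t)`;
at the endpoints both sides vanish.

By (A2), keeping the left (right) daughter multiplies the marginal mass `μ(a_j ≤ x_j ≤ b_j)`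
by at most `1 - η (1 - P)` (resp. `1 - η P`), which is `≤ exp (-(η/4) Δ / (Δ + Ḡ²))`. Splits
along other coordinates leave the marginal mass unchanged, and the bound follows along the chain.
-/

open MeasureTheory Set

noncomputable section

namespace RegressionTree

/-- The unit cube `[0,1]^d`. -/
def cube (d : ℕ) : Set (Fin d → ℝ) := Set.univ.pi fun _ => Set.Icc 0 1

/-- The box (node) `∏_j [A j, B j]`. -/
def box {d : ℕ} (A B : Fin d → ℝ) : Set (Fin d → ℝ) := Set.univ.pi fun i => Set.Icc (A i) (B i)

/-- `A`, `B` describe a node: a nondegenerate box inside the unit cube. -/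
def IsNode {d : ℕ} (A B : Fin d → ℝ) : Prop := ∀ i, 0 ≤ A i ∧ A i < B i ∧ B i ≤ 1

/-- Conditional expectation `E_μ[f | t] = (∫_t f dμ)/μ(t)`. -/
def cAvg {d : ℕ} (μ : Measure (Fin d → ℝ)) (f : (Fin d → ℝ) → ℝ) (t : Set (Fin d → ℝ)) : ℝ :=
  (∫ x in t, f x ∂μ) / (μ t).toReal

/-- Left daughter node `{x ∈ t : x_j ≤ s}`. -/
def leftD {d : ℕ} (A B : Fin d → ℝ) (j : Fin d) (s : ℝ) : Set (Fin d → ℝ) :=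
  {x | x ∈ box A B ∧ x j ≤ s}

/-- Right daughter node `{x ∈ t : x_j > s}`. -/
def rightD {d : ℕ} (A B : Fin d → ℝ) (j : Fin d) (s : ℝ) : Set (Fin d → ℝ) :=
  {x | x ∈ box A B ∧ s < x j}

/-- Conditional probability content of the left daughter node, `P_j(s|t)`. -/
def Pj {d : ℕ} (μ : Measure (Fin d → ℝ)) (A B : Fin d → ℝ) (j : Fin d) (s : ℝ) : ℝ :=
  (μ (leftD A B j s)).toReal / (μ (box A B)).toReal

/-- Impurity decrease `Δ(j,s;t) = P_j(s|t)(1 − P_j(s|t))(E[f|t_L] − E[f|t_R])²`. -/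
def impDec {d : ℕ} (μ : Measure (Fin d → ℝ)) (f : (Fin d → ℝ) → ℝ) (A B : Fin d → ℝ)
    (j : Fin d) (s : ℝ) : ℝ :=
  Pj μ A B j s * (1 - Pj μ A B j s) *
    (cAvg μ f (leftD A B j s) - cAvg μ f (rightD A B j s)) ^ 2

/-- Conditional partial dependence function `F̄_j(s;t)` (the `j`-th coordinate of the
free variable is replaced by `s` and the remaining coordinates are averaged against the
density `ρ` over the node; the redundant `j`-th integration cancels between numerator and
denominator). -/
def Fbar {d : ℕ} (ρ f : (Fin d → ℝ) → ℝ) (A B : Fin d → ℝ) (j : Fin d) (s : ℝ) : ℝ :=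
  (∫ x in box A B, f (Function.update x j s) * ρ (Function.update x j s)) /
    ∫ x in box A B, ρ (Function.update x j s)

/-- Centered conditional partial dependence function `Ḡ_j(s;t) = F̄_j(s;t) − E_μ[f|t]`. -/
def Gbar {d : ℕ} (μ : Measure (Fin d → ℝ)) (ρ f : (Fin d → ℝ) → ℝ) (A B : Fin d → ℝ)
    (j : Fin d) (s : ℝ) : ℝ :=
  Fbar ρ f A B j s - cAvg μ f (box A B)

/-- A split chain of depth `K`: nodes `t^k = box (A k) (B k)` starting at the unit cube,
where at each step `k < K` the split point `s_k` maximizes the impurity decrease along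
coordinate `j_k` and `t^{k+1}` is the corresponding left or right daughter node. -/
def SplitChain {d : ℕ} (μ : Measure (Fin d → ℝ)) (f : (Fin d → ℝ) → ℝ)
    (K : ℕ) (A B : ℕ → Fin d → ℝ) (js : ℕ → Fin d) (ss : ℕ → ℝ) : Prop :=
  (A 0 = fun _ => 0) ∧ (B 0 = fun _ => 1) ∧
  (∀ k, k ≤ K → IsNode (A k) (B k)) ∧
  ∀ k, k < K →
    ss k ∈ Set.Icc (A k (js k)) (B k (js k)) ∧
    (∀ s ∈ Set.Icc (A k (js k)) (B k (js k)),
      impDec μ f (A k) (B k) (js k) s ≤ impDec μ f (A k) (B k) (js k) (ss k)) ∧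
    ((A (k + 1) = A k ∧ B (k + 1) = Function.update (B k) (js k) (ss k)) ∨
      (A (k + 1) = Function.update (A k) (js k) (ss k) ∧ B (k + 1) = B k))

variable {d : ℕ}

lemma measurableSet_cube : MeasurableSet (cube d) :=
  MeasurableSet.univ_pi fun _ => measurableSet_Icc

lemma measurableSet_box (A B : Fin d → ℝ) : MeasurableSet (box A B) :=
  MeasurableSet.univ_pi fun _ => measurableSet_Icc

lemma isCompact_box (A B : Fin d → ℝ) : IsCompact (box A B) :=
  isCompact_univ_pi fun _ => isCompact_Icc

lemma volume_box_pos {A B : Fin d → ℝ} (h : ∀ i, A i < B i) : 0 < volume (box A B) := by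
  rw [box, pi_univ_Icc, Real.volume_Icc_pi, CanonicallyOrderedAdd.prod_pos]
  exact fun i _ => ENNReal.ofReal_pos.2 (sub_pos.2 (h i))

lemma IsNode.box_subset_cube {A B : Fin d → ℝ} (h : IsNode A B) : box A B ⊆ cube d :=
  pi_mono fun i _ => Icc_subset_Icc (h i).1 (h i).2.2

lemma leftD_eq_box {A B : Fin d → ℝ} {j : Fin d} {s : ℝ} (hs : s ≤ B j) :
    leftD A B j s = box A (Function.update B j s) := by
  ext x
  simp only [leftD, box, mem_ofPred_eq, mem_univ_pi, mem_Icc]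
  constructor
  · rintro ⟨hx, hxj⟩ i
    rcases eq_or_ne i j with rfl | hij
    · simpa using ⟨(hx i).1, hxj⟩
    · simpa [hij] using hx i
  · intro hx
    refine ⟨fun i => ?_, by simpa using (hx j).2⟩
    rcases eq_or_ne i j with rfl | hij
    · simpa using ⟨(hx i).1, ((hx i).2.trans_eq (by simp)).trans hs⟩
    · simpa [hij] using hx i

lemma leftD_self (A B : Fin d → ℝ) (j : Fin d) : leftD A B j (B j) = box A B := by
  rw [leftD_eq_box le_rfl, Function.update_eq_self]

lemma measurableSet_rightD (A B : Fin d → ℝ) (j : Fin d) (s : ℝ) :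
    MeasurableSet (rightD A B j s) :=
  (measurableSet_box A B).inter (measurable_pi_apply j measurableSet_Ioi)

lemma leftD_union_rightD (A B : Fin d → ℝ) (j : Fin d) (s : ℝ) :
    leftD A B j s ∪ rightD A B j s = box A B := by
  ext x
  simp only [leftD, rightD, mem_union, mem_ofPred_eq, ← and_or_left, le_or_gt, and_true]

lemma disjoint_leftD_rightD (A B : Fin d → ℝ) (j : Fin d) (s : ℝ) :
    Disjoint (leftD A B j s) (rightD A B j s) :=
  disjoint_left.2 fun _ hl hr => hr.2.not_ge hl.2

section Slice

variable {m : ℕ}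

/-- The integral of `g` over the section `{x ∈ box A B | x j = u}`. -/
def sliceIntegral (g : (Fin (m + 1) → ℝ) → ℝ) (A B : Fin (m + 1) → ℝ) (j : Fin (m + 1))
    (u : ℝ) : ℝ :=
  ∫ y in box (A ∘ j.succAbove) (B ∘ j.succAbove), g (j.insertNth u y)

variable {g : (Fin (m + 1) → ℝ) → ℝ} {A B : Fin (m + 1) → ℝ} {j : Fin (m + 1)}

lemma continuous_sliceIntegral (hg : Continuous g) : Continuous (sliceIntegral g A B j) :=
  continuous_parametric_integral_of_continuous (f := fun u y => g (j.insertNth u y))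
    (hg.comp (Continuous.finInsertNth j continuous_fst continuous_snd)) (isCompact_box _ _)

lemma sliceIntegral_pos (hg : Continuous g) (hpos : ∀ x, 0 < g x) (h : ∀ i, A i < B i)
    (u : ℝ) : 0 < sliceIntegral g A B j u := by
  have hgu : Continuous fun y => g (j.insertNth u y) :=
    hg.comp (Continuous.finInsertNth j continuous_const continuous_id)
  rw [sliceIntegral, setIntegral_pos_iff_support_of_nonneg_ae
    (ae_of_all _ fun y => (hpos _).le) (hgu.continuousOn.integrableOn_compact (isCompact_box _ _)),
    Function.support_eq_univ fun y => (hpos _).ne', univ_inter]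
  exact volume_box_pos fun i => h _

lemma sliceIntegral_update_right (s : ℝ) :
    sliceIntegral g A (Function.update B j s) j = sliceIntegral g A B j := by
  unfold sliceIntegral
  rw [Function.update_comp_eq_of_forall_ne _ _ (Fin.succAbove_ne j)]

lemma setIntegral_box_eq_integral_sliceIntegral (hg : Continuous g) :
    ∫ x in box A B, g x = ∫ u in Icc (A j) (B j), sliceIntegral g A B j u := by
  set e := (MeasurableEquiv.piFinSuccAbove (fun _ => ℝ) j).symm
  have he : MeasurePreserving e := (volume_preserving_piFinSuccAbove (fun _ => ℝ) j).symm _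
  have hpre : e ⁻¹' box A B = Icc (A j) (B j) ×ˢ box (A ∘ j.succAbove) (B ∘ j.succAbove) := by
    rw [box, pi_univ_Icc, box, pi_univ_Icc]
    exact ((Fin.insertNthOrderIso (fun _ => ℝ) j).preimage_Icc _ _).trans (Icc_prod_eq _ _)
  rw [← he.map_eq, setIntegral_map_equiv, hpre, Measure.volume_eq_prod, setIntegral_prod]
  · rfl
  · exact (hg.comp (Continuous.finInsertNth j continuous_fst continuous_snd)).continuousOn
      |>.integrableOn_compact (isCompact_Icc.prod (isCompact_box _ _))

lemma setIntegral_box_comp_update (hg : Continuous g) (hAB : A j ≤ B j) (s : ℝ) :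
    ∫ x in box A B, g (Function.update x j s) = (B j - A j) * sliceIntegral g A B j s := by
  rw [setIntegral_box_eq_integral_sliceIntegral (g := fun x => g (Function.update x j s)) (j := j)
    (hg.comp (continuous_id.update j continuous_const))]
  simp only [sliceIntegral, Fin.update_insertNth]
  rw [setIntegral_const, Real.volume_real_Icc_of_le hAB, smul_eq_mul]

end Slice

lemma setIntegral_withDensity_cube {R : (Fin d → ℝ) → ℝ} (hR : Measurable R) (hR0 : ∀ x, 0 ≤ R x)
    {μ : Measure (Fin d → ℝ)}
    (hμ : μ = (volume.restrict (cube d)).withDensity fun x => ENNReal.ofReal (R x))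
    {S : Set (Fin d → ℝ)} (hS : MeasurableSet S) (hSc : S ⊆ cube d) (g : (Fin d → ℝ) → ℝ) :
    ∫ x in S, g x ∂μ = ∫ x in S, g x * R x := by
  rw [hμ, setIntegral_withDensity_eq_setIntegral_toReal_smul hR.ennreal_ofReal
    (ae_of_all _ fun _ => ENNReal.ofReal_lt_top) g hS, Measure.restrict_restrict hS,
    inter_eq_left.2 hSc]
  simp only [ENNReal.toReal_ofReal (hR0 _), smul_eq_mul, mul_comm]

lemma measureReal_rightD (μ : Measure (Fin d → ℝ)) [IsFiniteMeasure μ] (A B : Fin d → ℝ)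
    (j : Fin d) (s : ℝ) :
    μ.real (rightD A B j s) = μ.real (box A B) - μ.real (leftD A B j s) := by
  rw [← leftD_union_rightD A B j s,
    measureReal_union (disjoint_leftD_rightD A B j s) (measurableSet_rightD A B j s),
    add_sub_cancel_left]

lemma impDec_eq_sq_div (μ : Measure (Fin d → ℝ)) [IsFiniteMeasure μ] {f : (Fin d → ℝ) → ℝ}
    {A B : Fin d → ℝ} {j : Fin d} {s : ℝ} (hf : IntegrableOn f (box A B) μ)
    (hL : 0 < μ.real (leftD A B j s)) (hR : 0 < μ.real (rightD A B j s)) :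
    impDec μ f A B j s =
      (∫ x in leftD A B j s, f x ∂μ - cAvg μ f (box A B) * μ.real (leftD A B j s)) ^ 2 /
        (μ.real (leftD A B j s) * μ.real (rightD A B j s)) := by
  rw [← leftD_union_rightD A B j s] at hf
  have hmeas : μ.real (box A B) = μ.real (leftD A B j s) + μ.real (rightD A B j s) := by
    rw [measureReal_rightD]
    ring
  have hint : ∫ x in box A B, f x ∂μ =
      ∫ x in leftD A B j s, f x ∂μ + ∫ x in rightD A B j s, f x ∂μ := by
    rw [← leftD_union_rightD A B j s]
    exact setIntegral_union (disjoint_leftD_rightD A B j s) (measurableSet_rightD A B j s)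
      (hf.mono_set subset_union_left) (hf.mono_set subset_union_right)
  simp only [impDec, Pj, cAvg, ← measureReal_def, hmeas, hint]
  field_simp
  ring

lemma div_div_add_sq_le_of_isLocalMax {W H : ℝ → ℝ} {w h c S : ℝ}
    (hW : HasDerivAt W w S) (hH : HasDerivAt H h S) (hw : w ≠ 0)
    (hW0 : 0 < W S) (hWc : W S < c)
    (hmax : IsLocalMax (fun s => H s ^ 2 / (W s * (c - W s))) S) :
    H S ^ 2 / (W S * (c - W S)) / (H S ^ 2 / (W S * (c - W S)) + (h / w) ^ 2) ≤
      4 * (W S / c * (1 - W S / c)) := by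
  have hc : 0 < c := hW0.trans hWc
  have hcW : 0 < c - W S := sub_pos.2 hWc
  have hfoc := hmax.hasDerivAt_eq_zero ((hH.pow 2).div (hW.mul (hW.const_sub c)) (by positivity))
  rw [div_eq_zero_iff, or_iff_left (by positivity)] at hfoc
  simp only [Pi.pow_apply, Nat.cast_ofNat] at hfoc
  rcases eq_or_ne (H S) 0 with hH0 | hH0
  · rw [hH0, zero_pow two_ne_zero, zero_div, zero_div]
    have : 0 ≤ 1 - W S / c := sub_nonneg.2 ((div_le_one hc).2 hWc.le)
    positivity
  · have hh : h = H S * w * (c - 2 * W S) / (2 * W S * (c - W S)) := by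
      rw [eq_div_iff (by positivity)]
      apply mul_left_cancel₀ hH0
      linear_combination hfoc
    rw [hh]
    apply le_of_eq
    field_simp
    ring

section Density

variable {m : ℕ} {R F : (Fin (m + 1) → ℝ) → ℝ} {μ : Measure (Fin (m + 1) → ℝ)}
  {A B : Fin (m + 1) → ℝ} {j : Fin (m + 1)}

lemma setIntegral_leftD_eq_intervalIntegral (hR : Continuous R) (hR0 : ∀ x, 0 ≤ R x)
    (hμ : μ = (volume.restrict (cube (m + 1))).withDensity fun x => ENNReal.ofReal (R x))
    (hB : box A B ⊆ cube (m + 1)) {g : (Fin (m + 1) → ℝ) → ℝ} (hg : Continuous g) {s : ℝ}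
    (hs : s ∈ Icc (A j) (B j)) :
    ∫ x in leftD A B j s, g x ∂μ =
      ∫ u in A j..s, sliceIntegral (fun x => g x * R x) A B j u := by
  rw [setIntegral_withDensity_cube hR.measurable hR0 hμ ?_ fun x hx => hB hx.1,
    leftD_eq_box hs.2,
    setIntegral_box_eq_integral_sliceIntegral (g := fun x => g x * R x) (j := j) (hg.mul hR),
    sliceIntegral_update_right, Function.update_self, intervalIntegral.integral_of_le hs.1,
    integral_Icc_eq_integral_Ioc]
  rw [leftD_eq_box hs.2]
  exact measurableSet_box _ _

lemma measureReal_leftD_eq_intervalIntegral (hR : Continuous R) (hR0 : ∀ x, 0 ≤ R x)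
    (hμ : μ = (volume.restrict (cube (m + 1))).withDensity fun x => ENNReal.ofReal (R x))
    (hB : box A B ⊆ cube (m + 1)) {s : ℝ} (hs : s ∈ Icc (A j) (B j)) :
    μ.real (leftD A B j s) = ∫ u in A j..s, sliceIntegral R A B j u := by
  simpa using setIntegral_leftD_eq_intervalIntegral hR hR0 hμ hB (g := fun _ => 1)
    continuous_const hs

lemma Gbar_eq_sliceIntegral_div (hR : Continuous R) (hF : Continuous F) (hAB : A j < B j)
    (S : ℝ) :
    Gbar μ R F A B j S =
      sliceIntegral (fun x => F x * R x) A B j S / sliceIntegral R A B j S -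
        cAvg μ F (box A B) := by
  rw [Gbar, Fbar, setIntegral_box_comp_update (g := fun x => F x * R x) (hF.mul hR) hAB.le,
    setIntegral_box_comp_update hR hAB.le, mul_div_mul_left _ _ (sub_pos.2 hAB).ne']

end Density

section KeyRatio

variable {m : ℕ} {R F : (Fin (m + 1) → ℝ) → ℝ} {μ : Measure (Fin (m + 1) → ℝ)}
  [IsFiniteMeasure μ] {A B : Fin (m + 1) → ℝ} {j : Fin (m + 1)} {S : ℝ}

lemma impDec_div_add_Gbar_sq_le_of_mem_Ioo (hR : Continuous R) (hRpos : ∀ x, 0 < R x)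
    (hF : Continuous F)
    (hμ : μ = (volume.restrict (cube (m + 1))).withDensity fun x => ENNReal.ofReal (R x))
    (hnode : IsNode A B) (hS : S ∈ Ioo (A j) (B j))
    (hmax : ∀ s ∈ Ioo (A j) (B j), impDec μ F A B j s ≤ impDec μ F A B j S) :
    impDec μ F A B j S / (impDec μ F A B j S + Gbar μ R F A B j S ^ 2) ≤
      4 * (Pj μ A B j S * (1 - Pj μ A B j S)) := by
  have hB := hnode.box_subset_cube
  have hlt : ∀ i, A i < B i := fun i => (hnode i).2.1
  have hR0 : ∀ x, 0 ≤ R x := fun x => (hRpos x).le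
  set w := sliceIntegral R A B j
  set v := sliceIntegral (fun x => F x * R x) A B j
  have hw : Continuous w := continuous_sliceIntegral hR
  have hv : Continuous v := continuous_sliceIntegral (hF.mul hR)
  have hwpos : ∀ u, 0 < w u := sliceIntegral_pos hR hRpos hlt
  set W : ℝ → ℝ := fun s => ∫ u in A j..s, w u
  set c := W (B j)
  set E := cAvg μ F (box A B)
  set H : ℝ → ℝ := fun s => (∫ u in A j..s, v u) - E * W s
  have hleft : ∀ s ∈ Icc (A j) (B j), μ.real (leftD A B j s) = W s :=
    fun s hs => measureReal_leftD_eq_intervalIntegral hR hR0 hμ hB hs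
  have hbox : μ.real (box A B) = c := by rw [← leftD_self, hleft _ ⟨(hlt j).le, le_rfl⟩]
  have hWpos : ∀ s ∈ Ioo (A j) (B j), 0 < W s ∧ W s < c := by
    refine fun s hs => ⟨intervalIntegral.intervalIntegral_pos_of_pos
      (hw.intervalIntegrable _ _) hwpos hs.1, sub_pos.1 ?_⟩
    rw [intervalIntegral.integral_interval_sub_left (hw.intervalIntegrable _ _)
      (hw.intervalIntegrable _ _)]
    exact intervalIntegral.intervalIntegral_pos_of_pos (hw.intervalIntegrable _ _) hwpos hs.2
  have himp : ∀ s ∈ Ioo (A j) (B j), impDec μ F A B j s = H s ^ 2 / (W s * (c - W s)) := by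
    intro s hs
    have hs' := Ioo_subset_Icc_self hs
    have hright : μ.real (rightD A B j s) = c - W s := by
      rw [measureReal_rightD, hbox, hleft s hs']
    rw [impDec_eq_sq_div μ (hF.continuousOn.integrableOn_compact (isCompact_box A B))
      (by rw [hleft s hs']; exact (hWpos s hs).1) (by rw [hright]; exact sub_pos.2 (hWpos s hs).2),
      setIntegral_leftD_eq_intervalIntegral hR hR0 hμ hB hF hs', hleft s hs', hright]
  have hG : Gbar μ R F A B j S = (v S - E * w S) / w S := by
    rw [Gbar_eq_sliceIntegral_div hR hF (hlt j), div_sub' (hwpos S).ne', mul_comm]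
  rw [himp S hS, hG, Pj, ← measureReal_def, ← measureReal_def, hleft S (Ioo_subset_Icc_self hS),
    hbox]
  have hWd : HasDerivAt W (w S) S := (hw.integral_hasStrictDerivAt _ _).hasDerivAt
  refine div_div_add_sq_le_of_isLocalMax hWd
    ((hv.integral_hasStrictDerivAt _ _).hasDerivAt.sub (hWd.const_mul E)) (hwpos S).ne'
    (hWpos S hS).1 (hWpos S hS).2 ?_
  filter_upwards [Ioo_mem_nhds hS.1 hS.2] with s hs
  rw [← himp s hs, ← himp S hS]
  exact hmax s hs

lemma impDec_div_add_Gbar_sq_le_of_continuous (hR : Continuous R) (hRpos : ∀ x, 0 < R x)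
    (hF : Continuous F)
    (hμ : μ = (volume.restrict (cube (m + 1))).withDensity fun x => ENNReal.ofReal (R x))
    (hnode : IsNode A B) (hS : S ∈ Icc (A j) (B j))
    (hmax : ∀ s ∈ Icc (A j) (B j), impDec μ F A B j s ≤ impDec μ F A B j S) :
    impDec μ F A B j S / (impDec μ F A B j S + Gbar μ R F A B j S ^ 2) ≤
      4 * (Pj μ A B j S * (1 - Pj μ A B j S)) := by
  have hleft : ∀ s ∈ Icc (A j) (B j),
      μ.real (leftD A B j s) = ∫ u in A j..s, sliceIntegral R A B j u :=
    fun s hs => measureReal_leftD_eq_intervalIntegral hR (fun x => (hRpos x).le) hμ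
      hnode.box_subset_cube hs
  rcases eq_endpoints_or_mem_Ioo_of_mem_Icc hS with rfl | rfl | hS'
  · have hP : Pj μ A B j (A j) = 0 := by
      rw [Pj, ← measureReal_def, hleft _ hS, intervalIntegral.integral_same, zero_div]
    simp [impDec, hP]
  · have hbox : 0 < μ.real (box A B) := by
      rw [← leftD_self, hleft _ hS]
      exact intervalIntegral.intervalIntegral_pos_of_pos
        ((continuous_sliceIntegral hR).intervalIntegrable _ _)
        (sliceIntegral_pos hR hRpos fun i => (hnode i).2.1) (hnode j).2.1
    have hP : Pj μ A B j (B j) = 1 := by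
      rw [Pj, leftD_self, ← measureReal_def, div_self hbox.ne']
    simp [impDec, hP]
  · exact impDec_div_add_Gbar_sq_le_of_mem_Ioo hR hRpos hF hμ hnode hS'
      fun s hs => hmax s (Ioo_subset_Icc_self hs)

end KeyRatio

def projCube (x : Fin d → ℝ) : Fin d → ℝ := fun i => projIcc 0 1 zero_le_one (x i)

lemma continuous_projCube : Continuous (projCube (d := d)) :=
  continuous_pi fun i => continuous_subtype_val.comp (continuous_projIcc.comp (continuous_apply i))

lemma projCube_mem_cube (x : Fin d → ℝ) : projCube x ∈ cube d :=
  fun _ _ => Subtype.prop _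

lemma projCube_of_mem {x : Fin d → ℝ} (hx : x ∈ cube d) : projCube x = x :=
  funext fun i => congrArg Subtype.val (projIcc_of_mem zero_le_one (hx i (mem_univ i)))

lemma update_mem_box {A B x : Fin d → ℝ} {j : Fin d} {s : ℝ} (hx : x ∈ box A B)
    (hs : s ∈ Icc (A j) (B j)) : Function.update x j s ∈ box A B := by
  intro i _
  rcases eq_or_ne i j with rfl | hij
  · simpa using hs
  · simpa [hij] using hx i (mem_univ i)

lemma cAvg_congr_ae {μ : Measure (Fin d → ℝ)} {f g : (Fin d → ℝ) → ℝ} (h : f =ᵐ[μ] g)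
    (t : Set (Fin d → ℝ)) : cAvg μ f t = cAvg μ g t := by
  rw [cAvg, cAvg, integral_congr_ae (ae_restrict_of_ae h)]

lemma impDec_congr_ae {μ : Measure (Fin d → ℝ)} {f g : (Fin d → ℝ) → ℝ} (h : f =ᵐ[μ] g)
    (A B : Fin d → ℝ) (j : Fin d) (s : ℝ) : impDec μ f A B j s = impDec μ g A B j s := by
  simp only [impDec, cAvg_congr_ae h]

lemma impDec_div_add_Gbar_sq_le {ρ f : (Fin d → ℝ) → ℝ} (hρ : ContinuousOn ρ (cube d))
    (hρpos : ∀ x ∈ cube d, 0 < ρ x) {μ : Measure (Fin d → ℝ)} [IsFiniteMeasure μ]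
    (hμ : μ = (volume.restrict (cube d)).withDensity fun x => ENNReal.ofReal (ρ x))
    (hf : ContinuousOn f (cube d)) {A B : Fin d → ℝ} (hnode : IsNode A B) {j : Fin d} {S : ℝ}
    (hS : S ∈ Icc (A j) (B j))
    (hmax : ∀ s ∈ Icc (A j) (B j), impDec μ f A B j s ≤ impDec μ f A B j S) :
    impDec μ f A B j S / (impDec μ f A B j S + Gbar μ ρ f A B j S ^ 2) ≤
      4 * (Pj μ A B j S * (1 - Pj μ A B j S)) := by
  obtain ⟨m, rfl⟩ : ∃ m, d = m + 1 := ⟨d - 1, by have := j.pos; omega⟩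
  -- Composing with `projCube` makes `ρ` and `f` continuous on all of `ℝ^d` without changing
  -- them on the cube, hence without changing `μ`, `impDec` or `Gbar` on the node.
  have hRρ : EqOn (ρ ∘ projCube) ρ (cube _) := fun x hx => congrArg ρ (projCube_of_mem hx)
  have hFf : EqOn (f ∘ projCube) f (cube _) := fun x hx => congrArg f (projCube_of_mem hx)
  have hμR : μ = (volume.restrict (cube _)).withDensity
      fun x => ENNReal.ofReal ((ρ ∘ projCube) x) := by
    rw [hμ]
    exact withDensity_congr_ae ((ae_restrict_iff' measurableSet_cube).2
      (ae_of_all _ fun _ hx => congrArg ENNReal.ofReal (hRρ hx).symm))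
  have hFf_ae : f ∘ projCube =ᵐ[μ] f := by
    rw [hμ]
    exact (withDensity_absolutelyContinuous _ _).ae_le
      ((ae_restrict_iff' measurableSet_cube).2 (ae_of_all _ hFf))
  have hG : Gbar μ (ρ ∘ projCube) (f ∘ projCube) A B j S = Gbar μ ρ f A B j S := by
    have hupd : ∀ x ∈ box A B, Function.update x j S ∈ cube _ :=
      fun x hx => hnode.box_subset_cube (update_mem_box hx hS)
    simp only [Gbar, Fbar, cAvg_congr_ae hFf_ae]
    congr 2 <;> refine setIntegral_congr_fun (measurableSet_box A B) fun x hx => ?_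
    · simp only [hRρ (hupd x hx), hFf (hupd x hx)]
    · simp only [hRρ (hupd x hx)]
  have key := impDec_div_add_Gbar_sq_le_of_continuous
    (hρ.comp_continuous continuous_projCube projCube_mem_cube)
    (fun x => hρpos _ (projCube_mem_cube x))
    (hf.comp_continuous continuous_projCube projCube_mem_cube) hμR hnode hS
    (by simpa only [impDec_congr_ae hFf_ae] using hmax)
  rwa [impDec_congr_ae hFf_ae, hG] at key

lemma le_one_sub_mul_of_le_div {L R c : ℝ} (hL : 0 ≤ L) (hR : 0 ≤ R) (hc : c ≤ R / (L + R)) :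
    L ≤ (1 - c) * (L + R) := by
  rcases (add_nonneg hL hR).eq_or_lt with h | h
  · rw [← h]
    linarith
  · rw [le_div_iff₀ h] at hc
    linarith

section Marginal

variable {α : Type*} [MeasurableSpace α] {ν : Measure α} {X : α → ℝ}

lemma measureReal_preimage_Icc_eq_add [IsFiniteMeasure ν] (hX : Measurable X) {a s b : ℝ}
    (hs : s ∈ Icc a b) :
    ν.real (X ⁻¹' Icc a b) = ν.real (X ⁻¹' Icc a s) + ν.real (X ⁻¹' Ioc s b) := by
  rw [← Icc_union_Ioc_eq_Icc hs.1 hs.2, preimage_union,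
    measureReal_union ((disjoint_left.2 fun _ h₁ h₂ => h₂.1.not_ge h₁.2).preimage X)
      (hX measurableSet_Ioc)]

lemma measureReal_preimage_Icc_le_Ioc {s b : ℝ} (hnull : ν (X ⁻¹' {s}) = 0) (hsb : s ≤ b) :
    ν.real (X ⁻¹' Icc s b) ≤ ν.real (X ⁻¹' Ioc s b) := by
  calc ν.real (X ⁻¹' Icc s b) ≤ ν.real (X ⁻¹' {s}) + ν.real (X ⁻¹' Ioc s b) := by
        rw [← Ioc_insert_left hsb, insert_eq, preimage_union]
        exact measureReal_union_le _ _
    _ = ν.real (X ⁻¹' Ioc s b) := by rw [measureReal_def, hnull, ENNReal.toReal_zero, zero_add]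

lemma measureReal_preimage_Icc_split_le [IsFiniteMeasure ν] (hX : Measurable X)
    {a s b p η r : ℝ} (hs : s ∈ Icc a b) (hnull : ν (X ⁻¹' {s}) = 0) (hη : 0 ≤ η)
    (hr : r ≤ 4 * (p * (1 - p)))
    (hleft : η * p ≤ ν.real (X ⁻¹' Icc a s) / ν.real (X ⁻¹' Icc a b))
    (hright : η * (1 - p) ≤ ν.real (X ⁻¹' Ioc s b) / ν.real (X ⁻¹' Icc a b))
    {a' b' : ℝ} (hd : (a' = a ∧ b' = s) ∨ (a' = s ∧ b' = b)) :
    ν.real (X ⁻¹' Icc a' b') ≤ ν.real (X ⁻¹' Icc a b) * Real.exp (-(η / 4) * r) := by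
  suffices h : ∃ q, r ≤ 4 * q ∧
      ν.real (X ⁻¹' Icc a' b') ≤ (1 - η * q) * ν.real (X ⁻¹' Icc a b) by
    obtain ⟨q, hrq, hq⟩ := h
    rw [mul_comm (ν.real _)]
    refine hq.trans (mul_le_mul_of_nonneg_right ?_ measureReal_nonneg)
    exact (Real.one_sub_le_exp_neg _).trans (Real.exp_le_exp.2 (by nlinarith))
  rw [measureReal_preimage_Icc_eq_add hX hs] at hleft hright ⊢
  rcases hd with ⟨rfl, rfl⟩ | ⟨rfl, rfl⟩
  · exact ⟨1 - p, by nlinarith [sq_nonneg (1 - p)],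
      le_one_sub_mul_of_le_div measureReal_nonneg measureReal_nonneg hright⟩
  · rw [add_comm] at hleft ⊢
    exact ⟨p, by nlinarith [sq_nonneg p], (measureReal_preimage_Icc_le_Ioc hnull hs.2).trans
      (le_one_sub_mul_of_le_div measureReal_nonneg measureReal_nonneg hleft)⟩

end Marginal

lemma le_mul_exp_sum_of_succ_le {u t : ℕ → ℝ} {c : ℝ} {K : ℕ}
    (h : ∀ k < K, u (k + 1) ≤ u k * Real.exp (c * t k)) :
    u K ≤ u 0 * Real.exp (c * ∑ k ∈ Finset.range K, t k) := by
  induction K with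
  | zero => simp
  | succ K ih =>
    rw [Finset.sum_range_succ, mul_add, Real.exp_add, ← mul_assoc]
    exact (h K K.lt_succ_self).trans (mul_le_mul_of_nonneg_right
      (ih fun k hk => h k (hk.trans K.lt_succ_self)) (Real.exp_pos _).le)

/-- Under Assumption (A2), the marginal probability content of a terminal
subnode is exponentially small in the accumulated normalized impurity decreases (MDI). -/
theorem subnode_probability_exponential_bound (d : ℕ)
    (ρ f : (Fin d → ℝ) → ℝ)
    (hρ_cont : ContinuousOn ρ (cube d)) (hρ_pos : ∀ x ∈ cube d, 0 < ρ x)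
    (μ : Measure (Fin d → ℝ))
    (hμ : μ = (volume.restrict (cube d)).withDensity fun x => ENNReal.ofReal (ρ x))
    (hprob : IsProbabilityMeasure μ)
    (hf_cont : ContinuousOn f (cube d))
    (η : ℝ) (hη : η ∈ Set.Ioc (0 : ℝ) 1)
    (hA2 : ∀ A B : Fin d → ℝ, IsNode A B → ∀ j : Fin d, ∀ s ∈ Set.Icc (A j) (B j),
      η * Pj μ A B j s ≤
        (μ {x | A j ≤ x j ∧ x j ≤ s}).toReal / (μ {x | A j ≤ x j ∧ x j ≤ B j}).toReal ∧
      η * (1 - Pj μ A B j s) ≤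
        (μ {x | s < x j ∧ x j ≤ B j}).toReal / (μ {x | A j ≤ x j ∧ x j ≤ B j}).toReal)
    (K : ℕ) (A B : ℕ → Fin d → ℝ) (js : ℕ → Fin d) (ss : ℕ → ℝ)
    (hchain : SplitChain μ f K A B js ss)
    (j : Fin d) :
    (μ {x | x ∈ cube d ∧ A K j ≤ x j ∧ x j ≤ B K j}).toReal ≤
      Real.exp (-(η / 4) * ∑ k ∈ Finset.range K,
        if js k = j then
          impDec μ f (A k) (B k) j (ss k) /
            (impDec μ f (A k) (B k) j (ss k) + Gbar μ ρ f (A k) (B k) j (ss k) ^ 2)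
        else 0) := by
  have := hprob
  obtain ⟨-, -, hnode, hsplit⟩ := hchain
  have hnull : ∀ s, μ ((fun x => x j) ⁻¹' {s}) = 0 := fun s => by
    rw [hμ]
    exact (withDensity_absolutelyContinuous _ _).trans
      (Measure.absolutelyContinuous_of_le Measure.restrict_le_self)
      (by rw [volume_pi]; exact Measure.pi_hyperplane (α := fun _ => ℝ) _ j s)
  refine (measureReal_mono fun x hx => hx.2).trans
    ((le_mul_exp_sum_of_succ_le (u := fun k => μ.real ((fun x => x j) ⁻¹' Icc (A k j) (B k j)))
      fun k hk => ?_).trans (mul_le_of_le_one_left (Real.exp_pos _).le measureReal_le_one))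
  obtain ⟨hs, hmax, hdaughter⟩ := hsplit k hk
  by_cases hj : js k = j
  · subst hj
    have hA2k := hA2 _ _ (hnode k hk.le) _ _ hs
    simp only [if_true]
    exact measureReal_preimage_Icc_split_le (measurable_pi_apply _) hs (hnull _) hη.1.le
      (impDec_div_add_Gbar_sq_le hρ_cont hρ_pos hμ hf_cont (hnode k hk.le) hs hmax) hA2k.1 hA2k.2
      (by rcases hdaughter with ⟨h₁, h₂⟩ | ⟨h₁, h₂⟩ <;> simp [h₁, h₂])
  · simp only [hj, if_false, mul_zero, Real.exp_zero, mul_one]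
    rcases hdaughter with ⟨h₁, h₂⟩ | ⟨h₁, h₂⟩ <;>
      simp [h₁, h₂, Function.update_of_ne (Ne.symm hj)]

end RegressionTree
end
end

section
/- In the multivariate node framework, let [0,1]^d = t⁰ ⊃ t¹ ⊃ ⋯ ⊃ t^K be a split chain with coordinates j_k and split points s_k, and suppose Δ(j_k, s_k; t^k) > 0 for every k < K. Then μ(t^K) = ∏_{k=0}^{K−1} (1/2)·(1 + η_k·√( Ḡ_{j_k}(s_k; t^k)² / (Ḡ_{j_k}(s_k; t^k)² + Δ(j_k, s_k; t^k)) )), where η_k = +1 if either (t^{k+1} is the right daughter of t^k and P_{j_k}(s_k|t^k) < 1/2) or (t^{k+1} is the left daughter of t^k and P_{j_k}(s_k|t^k) ≥ 1/2), and η_k = −1 otherwise. -/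
open MeasureTheory Set

noncomputable section

namespace RegressionTree6

/-- The unit cube `[0,1]^d`. -/
def cube (d : ℕ) : Set (Fin d → ℝ) := Set.univ.pi fun _ => Set.Icc 0 1

/-- The box (node) `∏_j [A j, B j]`. -/
def box {d : ℕ} (A B : Fin d → ℝ) : Set (Fin d → ℝ) := Set.univ.pi fun i => Set.Icc (A i) (B i)

/-- `A`, `B` describe a node: a nondegenerate box inside the unit cube. -/
def IsNode {d : ℕ} (A B : Fin d → ℝ) : Prop := ∀ i, 0 ≤ A i ∧ A i < B i ∧ B i ≤ 1

/-- Conditional expectation `E_μ[f | t] = (∫_t f dμ)/μ(t)`. -/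
def cAvg {d : ℕ} (μ : Measure (Fin d → ℝ)) (f : (Fin d → ℝ) → ℝ) (t : Set (Fin d → ℝ)) : ℝ :=
  (∫ x in t, f x ∂μ) / (μ t).toReal

/-- Left daughter node `{x ∈ t : x_j ≤ s}`. -/
def leftD {d : ℕ} (A B : Fin d → ℝ) (j : Fin d) (s : ℝ) : Set (Fin d → ℝ) :=
  {x | x ∈ box A B ∧ x j ≤ s}

/-- Right daughter node `{x ∈ t : x_j > s}`. -/
def rightD {d : ℕ} (A B : Fin d → ℝ) (j : Fin d) (s : ℝ) : Set (Fin d → ℝ) :=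
  {x | x ∈ box A B ∧ s < x j}

/-- Conditional probability content of the left daughter node, `P_j(s|t)`. -/
def Pj {d : ℕ} (μ : Measure (Fin d → ℝ)) (A B : Fin d → ℝ) (j : Fin d) (s : ℝ) : ℝ :=
  (μ (leftD A B j s)).toReal / (μ (box A B)).toReal

/-- Impurity decrease `Δ(j,s;t) = P_j(s|t)(1 − P_j(s|t))(E[f|t_L] − E[f|t_R])²`. -/
def impDec {d : ℕ} (μ : Measure (Fin d → ℝ)) (f : (Fin d → ℝ) → ℝ) (A B : Fin d → ℝ)
    (j : Fin d) (s : ℝ) : ℝ :=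
  Pj μ A B j s * (1 - Pj μ A B j s) *
    (cAvg μ f (leftD A B j s) - cAvg μ f (rightD A B j s)) ^ 2

/-- Conditional partial dependence function `F̄_j(s;t)` (the `j`-th coordinate of the
free variable is replaced by `s` and the remaining coordinates are averaged against the
density `ρ` over the node; the redundant `j`-th integration cancels between numerator and
denominator). -/
def Fbar {d : ℕ} (ρ f : (Fin d → ℝ) → ℝ) (A B : Fin d → ℝ) (j : Fin d) (s : ℝ) : ℝ :=
  (∫ x in box A B, f (Function.update x j s) * ρ (Function.update x j s)) /
    ∫ x in box A B, ρ (Function.update x j s)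

/-- Centered conditional partial dependence function `Ḡ_j(s;t) = F̄_j(s;t) − E_μ[f|t]`. -/
def Gbar {d : ℕ} (μ : Measure (Fin d → ℝ)) (ρ f : (Fin d → ℝ) → ℝ) (A B : Fin d → ℝ)
    (j : Fin d) (s : ℝ) : ℝ :=
  Fbar ρ f A B j s - cAvg μ f (box A B)

/-- A split chain of depth `K`: nodes `t^k = box (A k) (B k)` starting at the unit cube,
where at each step `k < K` the split point `s_k` maximizes the impurity decrease along
coordinate `j_k` and `t^{k+1}` is the corresponding left or right daughter node. -/
def SplitChain {d : ℕ} (μ : Measure (Fin d → ℝ)) (f : (Fin d → ℝ) → ℝ)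
    (K : ℕ) (A B : ℕ → Fin d → ℝ) (js : ℕ → Fin d) (ss : ℕ → ℝ) : Prop :=
  (A 0 = fun _ => 0) ∧ (B 0 = fun _ => 1) ∧
  (∀ k, k ≤ K → IsNode (A k) (B k)) ∧
  ∀ k, k < K →
    ss k ∈ Set.Icc (A k (js k)) (B k (js k)) ∧
    (∀ s ∈ Set.Icc (A k (js k)) (B k (js k)),
      impDec μ f (A k) (B k) (js k) s ≤ impDec μ f (A k) (B k) (js k) (ss k)) ∧
    ((A (k + 1) = A k ∧ B (k + 1) = Function.update (B k) (js k) (ss k)) ∨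
      (A (k + 1) = Function.update (A k) (js k) (ss k) ∧ B (k + 1) = B k))

/-!
Along the split coordinate `j`, the mass `m u` and the `f`-integral `L u` of the left daughter
`{x_j ≤ u}` are, by Fubini, primitives of the section integrals of `ρ` and `f ρ`, whose ratio at
`s` is `F̄_j(s)`. Writing `Δ = P (1 - P) D²` with `P = m / M` and `D` the gap between the daughter
means, stationarity of `Δ` at an interior optimum `s` gives `Ḡ_j(s) = (1/2 - P) D`. Hence
`Ḡ² + Δ = D² / 4`, the square root equals `|1 - 2P|`, and `(1 + η |1 - 2P|) / 2` is exactly the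
share `P` or `1 - P` of the mass kept by the chosen daughter, so the masses telescope into the
product. Positivity of `Δ` rules out the endpoints and a zero gap. To get continuity off the cube,
`ρ` and `f` are precomposed with the projection onto the cube, which changes none of the quantities.
-/

section Box

variable {d : ℕ} {A B : Fin d → ℝ} {j : Fin d} {u : ℝ}

theorem box_eq_Icc (A B : Fin d → ℝ) : box A B = Icc A B :=
  pi_univ_Icc A B

theorem measurableSet_box (A B : Fin d → ℝ) : MeasurableSet (box A B) :=
  box_eq_Icc A B ▸ measurableSet_Icc

theorem isCompact_box (A B : Fin d → ℝ) : IsCompact (box A B) :=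
  box_eq_Icc A B ▸ isCompact_Icc

theorem IsNode.box_subset_cube (h : IsNode A B) : box A B ⊆ cube d := by
  rw [box_eq_Icc, show cube d = Icc 0 1 from pi_univ_Icc 0 1]
  exact Icc_subset_Icc (fun i => (h i).1) fun i => (h i).2.2

theorem update_mem_box {x : Fin d → ℝ} (hx : x ∈ box A B) (hu : u ∈ Icc (A j) (B j)) :
    Function.update x j u ∈ box A B := by
  rw [box_eq_Icc] at hx ⊢
  exact ⟨le_update_iff.2 ⟨hu.1, fun i _ => hx.1 i⟩,
    update_le_iff.2 ⟨hu.2, fun i _ => hx.2 i⟩⟩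

theorem leftD_eq_box (hu : u ≤ B j) : leftD A B j u = box A (Function.update B j u) := by
  ext x
  simp only [leftD, box_eq_Icc, mem_ofPred_eq, mem_Icc, le_update_iff]
  constructor
  · rintro ⟨⟨hAx, hxB⟩, hxu⟩
    exact ⟨hAx, hxu, fun i _ => hxB i⟩
  · rintro ⟨hAx, hxu, hxB⟩
    refine ⟨⟨hAx, fun i => ?_⟩, hxu⟩
    rcases eq_or_ne i j with rfl | hi
    exacts [hxu.trans hu, hxB i hi]

theorem leftD_union_rightD : leftD A B j u ∪ rightD A B j u = box A B := by
  ext x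
  simp only [leftD, rightD, mem_union, mem_ofPred_eq, ← and_or_left, le_or_gt, and_true]

theorem disjoint_leftD_rightD : Disjoint (leftD A B j u) (rightD A B j u) :=
  disjoint_left.2 fun _ hl hr => (not_lt.2 hl.2) hr.2

theorem measurableSet_rightD : MeasurableSet (rightD A B j u) :=
  (measurableSet_box A B).inter (measurableSet_lt measurable_const (measurable_pi_apply j))

theorem rightD_ae_eq_box {μ : Measure (Fin d → ℝ)} (hμ : μ {x | x j = u} = 0)
    (hu : A j ≤ u) : rightD A B j u =ᵐ[μ] box (Function.update A j u) B := by
  refine ae_eq_set.2 ⟨?_, measure_mono_null (fun x ⟨hx, hxr⟩ => ?_) hμ⟩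
  · refine measure_mono_null (fun x ⟨⟨hx, hux⟩, hxl⟩ => ?_) measure_empty
    refine hxl ?_
    rw [box_eq_Icc] at hx ⊢
    exact ⟨update_le_iff.2 ⟨hux.le, fun i _ => hx.1 i⟩, hx.2⟩
  · rw [box_eq_Icc, mem_Icc, update_le_iff] at hx
    have hx' : x ∈ box A B := by
      rw [box_eq_Icc]
      refine ⟨fun i => ?_, hx.2⟩
      rcases eq_or_ne i j with rfl | hi
      exacts [hu.trans hx.1.1, hx.1.2 i hi]
    exact le_antisymm (not_lt.1 fun h => hxr ⟨hx', h⟩) hx.1.1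

end Box

section Slice

variable {n : ℕ}

/-- The integral of `H` over the section `x j = u` of `box A B`. -/
def slice (H : (Fin (n + 1) → ℝ) → ℝ) (A B : Fin (n + 1) → ℝ) (j : Fin (n + 1)) (u : ℝ) : ℝ :=
  ∫ y in box (A ∘ j.succAbove) (B ∘ j.succAbove), H (j.insertNth u y)

theorem setIntegral_box_eq_intervalIntegral_slice {H : (Fin (n + 1) → ℝ) → ℝ}
    (hH : Continuous H) (A B : Fin (n + 1) → ℝ) (j : Fin (n + 1)) (hAB : A j ≤ B j) :
    ∫ x in box A B, H x = ∫ u in A j..B j, slice H A B j u := by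
  set e := (MeasurableEquiv.piFinSuccAbove (fun _ => ℝ) j).symm
  have he : MeasurePreserving e :=
    (volume_preserving_piFinSuccAbove (fun _ : Fin (n + 1) => ℝ) j).symm _
  have hbox : e ⁻¹' box A B = Icc (A j) (B j) ×ˢ box (A ∘ j.succAbove) (B ∘ j.succAbove) := by
    rw [box_eq_Icc, box_eq_Icc]
    exact ((Fin.insertNthOrderIso (fun _ => ℝ) j).preimage_Icc _ _).trans (Icc_prod_eq _ _)
  rw [← he.map_eq, setIntegral_map_equiv, hbox, Measure.volume_eq_prod, setIntegral_prod,
    intervalIntegral.integral_of_le hAB, integral_Icc_eq_integral_Ioc]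
  · rfl
  · refine (Continuous.continuousOn ?_).integrableOn_compact
      (isCompact_Icc.prod (isCompact_box _ _))
    change Continuous fun p : ℝ × (Fin n → ℝ) => H (j.insertNth p.1 p.2)
    fun_prop

theorem continuous_slice {H : (Fin (n + 1) → ℝ) → ℝ} (hH : Continuous H)
    (A B : Fin (n + 1) → ℝ) (j : Fin (n + 1)) : Continuous (slice H A B j) :=
  continuous_parametric_integral_of_continuous (by fun_prop) (isCompact_box _ _)

theorem slice_pos {H : (Fin (n + 1) → ℝ) → ℝ} (hH : Continuous H) (hH₀ : ∀ x, 0 < H x)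
    {A B : Fin (n + 1) → ℝ} (hAB : ∀ i, A i < B i) (j : Fin (n + 1)) (u : ℝ) :
    0 < slice H A B j u := by
  have hint : IntegrableOn (fun y => H (j.insertNth u y))
      (box (A ∘ j.succAbove) (B ∘ j.succAbove)) :=
    (by fun_prop : Continuous fun y => H (j.insertNth u y)).continuousOn.integrableOn_compact
      (isCompact_box _ _)
  rw [slice, setIntegral_pos_iff_support_of_nonneg_ae (.of_forall fun _ => (hH₀ _).le) hint,
    Function.support_eq_univ fun _ => (hH₀ _).ne', univ_inter, box_eq_Icc, Real.volume_Icc_pi]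
  exact CanonicallyOrderedAdd.prod_pos.2 fun i _ => ENNReal.ofReal_pos.2 (sub_pos.2 (hAB _))

theorem slice_update_right (H : (Fin (n + 1) → ℝ) → ℝ) (A B : Fin (n + 1) → ℝ)
    (j : Fin (n + 1)) (c : ℝ) : slice H A (Function.update B j c) j = slice H A B j := by
  have : Function.update B j c ∘ j.succAbove = B ∘ j.succAbove :=
    funext fun i => Function.update_of_ne (j.succAbove_ne i) _ _
  funext u
  simp only [slice, this]

theorem slice_comp_update (H : (Fin (n + 1) → ℝ) → ℝ) (A B : Fin (n + 1) → ℝ)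
    (j : Fin (n + 1)) (s u : ℝ) :
    slice (fun x => H (Function.update x j s)) A B j u = slice H A B j s := by
  simp only [slice, Fin.update_insertNth]

theorem Fbar_eq_slice_div {ρ f : (Fin (n + 1) → ℝ) → ℝ} (hρ : Continuous ρ) (hf : Continuous f)
    {A B : Fin (n + 1) → ℝ} {j : Fin (n + 1)} (hAB : A j < B j) (s : ℝ) :
    Fbar ρ f A B j s = slice (fun x => f x * ρ x) A B j s / slice ρ A B j s := by
  rw [Fbar, setIntegral_box_eq_intervalIntegral_slice (by fun_prop) _ _ _ hAB.le,
    setIntegral_box_eq_intervalIntegral_slice (by fun_prop) _ _ _ hAB.le]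
  simp only [slice_comp_update (fun x => f x * ρ x), slice_comp_update ρ,
    intervalIntegral.integral_const, smul_eq_mul]
  exact mul_div_mul_left _ _ (sub_pos.2 hAB).ne'

end Slice

section CubeMeasure

variable {d : ℕ} {ρ : (Fin d → ℝ) → ℝ}

def cubeMeasure (ρ : (Fin d → ℝ) → ℝ) : Measure (Fin d → ℝ) :=
  (volume.restrict (cube d)).withDensity fun x => ENNReal.ofReal (ρ x)

theorem measurableSet_cube : MeasurableSet (cube d) :=
  MeasurableSet.univ_pi fun _ => measurableSet_Icc

theorem cubeMeasure_congr {ρ' : (Fin d → ℝ) → ℝ} (h : EqOn ρ ρ' (cube d)) :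
    cubeMeasure ρ = cubeMeasure ρ' :=
  withDensity_congr_ae <| (ae_restrict_iff' measurableSet_cube).2 <|
    .of_forall fun _ hx => congrArg ENNReal.ofReal (h hx)

theorem cubeMeasure_compl_cube : cubeMeasure ρ (cube d)ᶜ = 0 :=
  withDensity_absolutelyContinuous _ _ <| by
    rw [Measure.restrict_apply measurableSet_cube.compl, compl_inter_self, measure_empty]

theorem cubeMeasure_cube : cubeMeasure ρ (cube d) = cubeMeasure ρ univ :=
  measure_congr (ae_eq_univ.2 cubeMeasure_compl_cube)

theorem ae_eq_of_eqOn_cube {f f' : (Fin d → ℝ) → ℝ} (h : EqOn f f' (cube d)) :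
    f =ᵐ[cubeMeasure ρ] f' :=
  measure_mono_null (fun _ hx hcube => hx (h hcube)) cubeMeasure_compl_cube

theorem cubeMeasure_hyperplane (j : Fin d) (u : ℝ) : cubeMeasure ρ {x | x j = u} = 0 := by
  refine withDensity_absolutelyContinuous _ _ (Measure.restrict_le_self.absolutelyContinuous ?_)
  rw [volume_pi]
  exact Measure.pi_hyperplane (fun _ : Fin d => (volume : Measure ℝ)) j u

theorem isFiniteMeasure_cubeMeasure (hρ : Continuous ρ) : IsFiniteMeasure (cubeMeasure ρ) :=
  isFiniteMeasure_withDensity_ofReal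
    (hρ.continuousOn.integrableOn_compact (isCompact_univ_pi fun _ => isCompact_Icc)).2

theorem setIntegral_cubeMeasure (hρ : Measurable ρ) (hρ₀ : ∀ x, 0 ≤ ρ x)
    {S : Set (Fin d → ℝ)} (hS : MeasurableSet S) (hSc : S ⊆ cube d) (g : (Fin d → ℝ) → ℝ) :
    ∫ x in S, g x ∂cubeMeasure ρ = ∫ x in S, g x * ρ x := by
  rw [cubeMeasure, setIntegral_withDensity_eq_setIntegral_toReal_smul hρ.ennreal_ofReal
      (.of_forall fun _ => ENNReal.ofReal_lt_top) g hS, Measure.restrict_restrict hS,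
    inter_eq_self_of_subset_left hSc]
  simp only [ENNReal.toReal_ofReal (hρ₀ _), smul_eq_mul, mul_comm]

end CubeMeasure

section SplitGain

/-- The impurity decrease of a split whose left daughter has mass `m` and `f`-integral `L`,
inside a node of mass `M` and `f`-integral `T`. -/
def splitGain (M T m L : ℝ) : ℝ :=
  m / M * (1 - m / M) * (L / m - (T - L) / (M - m)) ^ 2

theorem sub_div_eq_of_isLocalMax_splitGain {m L : ℝ → ℝ} {g h M T s : ℝ}
    (hm : HasDerivAt m g s) (hL : HasDerivAt L h s) (hg : g ≠ 0)
    (hm₀ : 0 < m s) (hmM : m s < M)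
    (hD : L s / m s - (T - L s) / (M - m s) ≠ 0)
    (hmax : IsLocalMax (fun u => splitGain M T (m u) (L u)) s) :
    h / g - T / M = (1 / 2 - m s / M) * (L s / m s - (T - L s) / (M - m s)) := by
  have hM : M ≠ 0 := by linarith
  have hmM' : M - m s ≠ 0 := by linarith
  have hzero := hmax.hasDerivAt_eq_zero <|
    ((hm.div_const M).mul ((hm.div_const M).const_sub 1)).mul
      (((hL.div hm hm₀.ne').sub ((hL.const_sub T).div (hm.const_sub M) hmM')).pow 2)
  simp only [Pi.mul_apply, Pi.div_apply, Pi.sub_apply] at hzero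
  have hN : (M - m s) * L s - m s * (T - L s) ≠ 0 := by
    contrapose! hD
    field_simp
    linear_combination hD
  norm_num at hzero
  field_simp at hzero ⊢
  refine mul_left_cancel₀ hN ?_
  linear_combination hzero

theorem sqrt_sq_div_sq_add_mul_sq (P : ℝ) {D : ℝ} (hD : D ≠ 0) :
    √(((1 / 2 - P) * D) ^ 2 / (((1 / 2 - P) * D) ^ 2 + P * (1 - P) * D ^ 2)) =
      |1 - 2 * P| := by
  rw [show ((1 / 2 - P) * D) ^ 2 + P * (1 - P) * D ^ 2 = (D / 2) ^ 2 by ring,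
    ← div_pow, Real.sqrt_sq_eq_abs, show (1 / 2 - P) * D / (D / 2) = 1 - 2 * P by field_simp]

theorem eq_one_add_ite_mul_abs_div_two (P : ℝ) :
    P = (1 + (if 1 / 2 ≤ P then 1 else -1) * |1 - 2 * P|) / 2 := by
  split_ifs with hP
  · rw [abs_of_nonpos (by linarith)]; ring
  · rw [abs_of_pos (by linarith)]; ring

theorem one_sub_eq_one_add_ite_mul_abs_div_two (P : ℝ) :
    1 - P = (1 + (if P < 1 / 2 then 1 else -1) * |1 - 2 * P|) / 2 := by
  split_ifs with hP
  · rw [abs_of_pos (by linarith)]; ring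
  · rw [abs_of_nonpos (by linarith)]; ring

end SplitGain

section Split

variable {d : ℕ} {μ : Measure (Fin d → ℝ)} {f : (Fin d → ℝ) → ℝ} {A B : Fin d → ℝ}
  {j : Fin d} {s : ℝ}

theorem measureReal_rightD [IsFiniteMeasure μ] (u : ℝ) :
    μ.real (rightD A B j u) = μ.real (box A B) - μ.real (leftD A B j u) := by
  rw [← leftD_union_rightD (u := u),
    measureReal_union disjoint_leftD_rightD measurableSet_rightD, add_sub_cancel_left]

theorem cAvg_rightD [IsFiniteMeasure μ] (hf : IntegrableOn f (box A B) μ) (u : ℝ) :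
    cAvg μ f (rightD A B j u) = (∫ x in box A B, f x ∂μ - ∫ x in leftD A B j u, f x ∂μ) /
      (μ.real (box A B) - μ.real (leftD A B j u)) := by
  have hunion := leftD_union_rightD (A := A) (B := B) (j := j) (u := u)
  rw [← measureReal_rightD, ← hunion,
    setIntegral_union disjoint_leftD_rightD measurableSet_rightD
      (hf.mono_set (hunion ▸ subset_union_left)) (hf.mono_set (hunion ▸ subset_union_right)),
    add_sub_cancel_left, cAvg, measureReal_def]

theorem impDec_eq_splitGain [IsFiniteMeasure μ] (hf : IntegrableOn f (box A B) μ) (u : ℝ) :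
    impDec μ f A B j u = splitGain (μ.real (box A B)) (∫ x in box A B, f x ∂μ)
      (μ.real (leftD A B j u)) (∫ x in leftD A B j u, f x ∂μ) := by
  rw [impDec, cAvg_rightD hf]
  rfl

theorem Pj_mem_Ioo_of_impDec_pos (h : 0 < impDec μ f A B j s) : Pj μ A B j s ∈ Ioo 0 1 := by
  rw [impDec] at h
  have hP := pos_of_mul_pos_left h (sq_nonneg _)
  constructor <;> nlinarith

theorem cAvg_leftD_ne_rightD_of_impDec_pos (h : 0 < impDec μ f A B j s) :
    cAvg μ f (leftD A B j s) ≠ cAvg μ f (rightD A B j s) := by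
  intro hD
  rw [impDec, hD, sub_self] at h
  simp at h

theorem mem_Ioo_of_impDec_pos (hμ : μ {x | x j = A j} = 0) (hs : s ∈ Icc (A j) (B j))
    (h : 0 < impDec μ f A B j s) : s ∈ Ioo (A j) (B j) := by
  have hP := Pj_mem_Ioo_of_impDec_pos h
  refine ⟨hs.1.lt_of_ne ?_, hs.2.lt_of_ne ?_⟩ <;> rintro rfl
  · have hnull : μ (leftD A B j (A j)) = 0 :=
      measure_mono_null (fun x hx => le_antisymm hx.2 ((box_eq_Icc A B ▸ hx.1).1 j)) hμ
    simp [Pj, hnull] at hP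
  · rw [Pj, leftD_eq_box le_rfl, Function.update_eq_self] at hP
    rcases eq_or_ne (μ (box A B)).toReal 0 with h0 | h0
    · simp [h0] at hP
    · simp [div_self h0] at hP

end Split

section OptimalSplit

variable {n : ℕ} {ρ f : (Fin (n + 1) → ℝ) → ℝ} {A B : Fin (n + 1) → ℝ} {j : Fin (n + 1)}
  {s : ℝ}

theorem setIntegral_leftD_cubeMeasure (hρ : Continuous ρ) (hρ₀ : ∀ x, 0 ≤ ρ x)
    (hnode : IsNode A B) (hf : Continuous f) {u : ℝ} (hu : u ∈ Icc (A j) (B j)) :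
    ∫ x in leftD A B j u, f x ∂cubeMeasure ρ =
      ∫ v in A j..u, slice (fun x => f x * ρ x) A B j v := by
  have hsub : box A (Function.update B j u) ⊆ box A B := by
    rw [box_eq_Icc, box_eq_Icc]
    exact Icc_subset_Icc_right (update_le_iff.2 ⟨hu.2, fun _ _ => le_rfl⟩)
  rw [leftD_eq_box hu.2, setIntegral_cubeMeasure hρ.measurable hρ₀ (measurableSet_box _ _)
      (hsub.trans hnode.box_subset_cube),
    setIntegral_box_eq_intervalIntegral_slice (by fun_prop) A _ j
      (by rw [Function.update_self]; exact hu.1),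
    Function.update_self, slice_update_right]

theorem hasDerivAt_setIntegral_leftD (hρ : Continuous ρ) (hρ₀ : ∀ x, 0 ≤ ρ x)
    (hnode : IsNode A B) (hf : Continuous f) (hs : s ∈ Ioo (A j) (B j)) :
    HasDerivAt (fun u => ∫ x in leftD A B j u, f x ∂cubeMeasure ρ)
      (slice (fun x => f x * ρ x) A B j s) s := by
  have hcont := continuous_slice (by fun_prop : Continuous fun x => f x * ρ x) A B j
  refine (intervalIntegral.integral_hasDerivAt_right (a := A j) (hcont.intervalIntegrable _ _)
    (hcont.stronglyMeasurableAtFilter _ _) hcont.continuousAt).congr_of_eventuallyEq ?_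
  filter_upwards [Ioo_mem_nhds hs.1 hs.2] with u hu
  exact setIntegral_leftD_cubeMeasure hρ hρ₀ hnode hf ⟨hu.1.le, hu.2.le⟩

theorem Gbar_eq_of_isMaxOn (hρ : Continuous ρ) (hρ₀ : ∀ x, 0 < ρ x) (hf : Continuous f)
    (hnode : IsNode A B) (hs : s ∈ Ioo (A j) (B j))
    (hmax : IsMaxOn (impDec (cubeMeasure ρ) f A B j) (Icc (A j) (B j)) s)
    (hP : Pj (cubeMeasure ρ) A B j s ∈ Ioo 0 1)
    (hD : cAvg (cubeMeasure ρ) f (leftD A B j s) ≠ cAvg (cubeMeasure ρ) f (rightD A B j s)) :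
    Gbar (cubeMeasure ρ) ρ f A B j s = (1 / 2 - Pj (cubeMeasure ρ) A B j s) *
      (cAvg (cubeMeasure ρ) f (leftD A B j s) - cAvg (cubeMeasure ρ) f (rightD A B j s)) := by
  set μ := cubeMeasure ρ
  have := isFiniteMeasure_cubeMeasure hρ
  have hfi : IntegrableOn f (box A B) μ :=
    hf.continuousOn.integrableOn_compact (isCompact_box A B)
  have hρ₀' : ∀ x, 0 ≤ ρ x := fun x => (hρ₀ x).le
  have hm : HasDerivAt (fun u => μ.real (leftD A B j u)) (slice ρ A B j s) s := by
    simpa using hasDerivAt_setIntegral_leftD hρ hρ₀' hnode continuous_const hs (f := fun _ => 1)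
  have hL := hasDerivAt_setIntegral_leftD hρ hρ₀' hnode hf hs
  have hmax' : IsLocalMax (fun u => splitGain (μ.real (box A B)) (∫ x in box A B, f x ∂μ)
      (μ.real (leftD A B j u)) (∫ x in leftD A B j u, f x ∂μ)) s :=
    (hmax.isLocalMax (Icc_mem_nhds hs.1 hs.2)).congr (.of_forall (impDec_eq_splitGain hfi))
  obtain ⟨hm₀, hM⟩ := (div_pos_iff.1 hP.1).resolve_right fun h => h.2.not_ge measureReal_nonneg
  have hmM : μ.real (leftD A B j s) < μ.real (box A B) := (div_lt_one hM).1 hP.2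
  have hD' := sub_ne_zero.2 hD
  rw [cAvg_rightD hfi] at hD'
  rw [Gbar, Fbar_eq_slice_div hρ hf (hnode j).2.1, cAvg_rightD hfi]
  exact sub_div_eq_of_isLocalMax_splitGain hm hL
    (slice_pos hρ hρ₀ (fun i => (hnode i).2.1) j s).ne' hm₀ hmM hD' hmax'

open Classical in
theorem toReal_measure_daughter_eq (hρ : Continuous ρ) (hρ₀ : ∀ x, 0 < ρ x) (hf : Continuous f)
    (hnode : IsNode A B) (hs : s ∈ Icc (A j) (B j))
    (hmax : IsMaxOn (impDec (cubeMeasure ρ) f A B j) (Icc (A j) (B j)) s)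
    (hpos : 0 < impDec (cubeMeasure ρ) f A B j s) {A' B' : Fin (n + 1) → ℝ}
    (hstep : (A' = A ∧ B' = Function.update B j s) ∨ (A' = Function.update A j s ∧ B' = B)) :
    (cubeMeasure ρ (box A' B')).toReal =
      (1 + (if (A' = Function.update A j s ∧ B' = B) ∧ Pj (cubeMeasure ρ) A B j s < 1 / 2 ∨
              (A' = A ∧ B' = Function.update B j s) ∧ 1 / 2 ≤ Pj (cubeMeasure ρ) A B j s
            then (1 : ℝ) else -1) *
        √(Gbar (cubeMeasure ρ) ρ f A B j s ^ 2 /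
          (Gbar (cubeMeasure ρ) ρ f A B j s ^ 2 + impDec (cubeMeasure ρ) f A B j s))) / 2 *
      (cubeMeasure ρ (box A B)).toReal := by
  set μ := cubeMeasure ρ
  have := isFiniteMeasure_cubeMeasure hρ
  have hs' := mem_Ioo_of_impDec_pos (cubeMeasure_hyperplane j (A j)) hs hpos
  have hP := Pj_mem_Ioo_of_impDec_pos hpos
  have hD := cAvg_leftD_ne_rightD_of_impDec_pos hpos
  have hM : μ.real (box A B) ≠ 0 := fun h => by simp [Pj, ← measureReal_def, h] at hP
  have hleft : μ.real (leftD A B j s) = Pj μ A B j s * μ.real (box A B) :=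
    (div_mul_cancel₀ _ hM).symm
  have hA : Function.update A j s ≠ A := Function.update_ne_self_iff.2 hs'.1.ne'
  rw [Gbar_eq_of_isMaxOn hρ hρ₀ hf hnode hs' hmax hP hD, impDec,
    sqrt_sq_div_sq_add_mul_sq _ (sub_ne_zero.2 hD)]
  rcases hstep with ⟨rfl, rfl⟩ | ⟨rfl, rfl⟩
  · simp only [hA.symm, false_and, false_or, true_and]
    rw [← eq_one_add_ite_mul_abs_div_two, ← leftD_eq_box hs.2]
    exact hleft
  · simp only [hA, false_and, or_false, true_and]
    rw [← one_sub_eq_one_add_ite_mul_abs_div_two,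
      ← measure_congr (rightD_ae_eq_box (cubeMeasure_hyperplane j s) hs.1)]
    change μ.real _ = _
    rw [measureReal_rightD, hleft, ← measureReal_def]
    ring

end OptimalSplit

section Congr

variable {d : ℕ} {μ : Measure (Fin d → ℝ)} {ρ ρ' f f' : (Fin d → ℝ) → ℝ} {A B : Fin d → ℝ}
  {j : Fin d} {s : ℝ}

theorem cAvg_congr_ae (h : f =ᵐ[μ] f') (t : Set (Fin d → ℝ)) : cAvg μ f t = cAvg μ f' t := by
  rw [cAvg, cAvg, integral_congr_ae (ae_restrict_of_ae h)]

theorem impDec_congr_ae (h : f =ᵐ[μ] f') (A B : Fin d → ℝ) (j : Fin d) (u : ℝ) :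
    impDec μ f A B j u = impDec μ f' A B j u := by
  simp only [impDec, cAvg_congr_ae h]

theorem Fbar_congr (hρ : EqOn ρ ρ' (box A B)) (hf : EqOn f f' (box A B))
    (hs : s ∈ Icc (A j) (B j)) : Fbar ρ f A B j s = Fbar ρ' f' A B j s := by
  rw [Fbar, Fbar,
    setIntegral_congr_fun (measurableSet_box A B) fun x hx => by
      rw [hρ (update_mem_box hx hs), hf (update_mem_box hx hs)],
    setIntegral_congr_fun (measurableSet_box A B) fun _ hx => hρ (update_mem_box hx hs)]

theorem Gbar_congr (hfμ : f =ᵐ[μ] f') (hρ : EqOn ρ ρ' (box A B)) (hf : EqOn f f' (box A B))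
    (hs : s ∈ Icc (A j) (B j)) : Gbar μ ρ f A B j s = Gbar μ ρ' f' A B j s := by
  rw [Gbar, Gbar, Fbar_congr hρ hf hs, cAvg_congr_ae hfμ]

end Congr

section Clamp

variable {d : ℕ}

def clamp (x : Fin d → ℝ) : Fin d → ℝ := fun i => projIcc 0 1 zero_le_one (x i)

theorem clamp_mem_cube (x : Fin d → ℝ) : clamp x ∈ cube d :=
  fun i _ => (projIcc 0 1 zero_le_one (x i)).2

theorem eqOn_comp_clamp (g : (Fin d → ℝ) → ℝ) : EqOn (g ∘ clamp) g (cube d) := fun _ hx =>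
  congrArg g <| funext fun i => congrArg Subtype.val (projIcc_of_mem _ (hx i trivial))

theorem continuous_comp_clamp {g : (Fin d → ℝ) → ℝ} (hg : ContinuousOn g (cube d)) :
    Continuous (g ∘ clamp) :=
  hg.comp_continuous (continuous_pi fun i => continuous_subtype_val.comp
    (continuous_projIcc.comp (continuous_apply i))) clamp_mem_cube

end Clamp

theorem eq_prod_range_of_succ {M : Type*} [CommMonoid M] {u c : ℕ → M} {K : ℕ} (h0 : u 0 = 1)
    (hsucc : ∀ k < K, u (k + 1) = c k * u k) : u K = ∏ k ∈ Finset.range K, c k := by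
  induction K with
  | zero => simpa using h0
  | succ K ih =>
    rw [Finset.prod_range_succ, hsucc K K.lt_succ_self,
      ih fun k hk => hsucc k (hk.trans K.lt_succ_self), mul_comm]

open Classical in
/-- The probability content of a terminal node of a split chain factors
exactly as a product over the ancestor splits, with signs determined by which daughter was
taken and whether the split is below the conditional median. -/
theorem node_probability_product_formula (d : ℕ)
    (ρ f : (Fin d → ℝ) → ℝ)
    (hρ_cont : ContinuousOn ρ (cube d)) (hρ_pos : ∀ x ∈ cube d, 0 < ρ x)
    (μ : Measure (Fin d → ℝ))
    (hμ : μ = (volume.restrict (cube d)).withDensity fun x => ENNReal.ofReal (ρ x))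
    (hprob : IsProbabilityMeasure μ)
    (hf_cont : ContinuousOn f (cube d))
    (K : ℕ) (A B : ℕ → Fin d → ℝ) (js : ℕ → Fin d) (ss : ℕ → ℝ)
    (hchain : SplitChain μ f K A B js ss)
    (hpos : ∀ k, k < K → 0 < impDec μ f (A k) (B k) (js k) (ss k)) :
    (μ (box (A K) (B K))).toReal =
      ∏ k ∈ Finset.range K,
        (1 +
          (if (A (k + 1) = Function.update (A k) (js k) (ss k) ∧ B (k + 1) = B k) ∧
                Pj μ (A k) (B k) (js k) (ss k) < 1 / 2 ∨
              (A (k + 1) = A k ∧ B (k + 1) = Function.update (B k) (js k) (ss k)) ∧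
                1 / 2 ≤ Pj μ (A k) (B k) (js k) (ss k)
            then (1 : ℝ) else -1) *
          Real.sqrt (Gbar μ ρ f (A k) (B k) (js k) (ss k) ^ 2 /
            (Gbar μ ρ f (A k) (B k) (js k) (ss k) ^ 2 +
              impDec μ f (A k) (B k) (js k) (ss k)))) / 2 := by
  obtain ⟨hA0, hB0, hnodes, hsteps⟩ := hchain
  obtain rfl : μ = cubeMeasure (ρ ∘ clamp) := hμ.trans (cubeMeasure_congr (eqOn_comp_clamp ρ).symm)
  have hf : f =ᵐ[cubeMeasure (ρ ∘ clamp)] f ∘ clamp := ae_eq_of_eqOn_cube (eqOn_comp_clamp f).symm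
  refine eq_prod_range_of_succ (u := fun k => (cubeMeasure (ρ ∘ clamp) (box (A k) (B k))).toReal)
    ?_ fun k hk => ?_
  · rw [hA0, hB0, show box (fun _ => 0) (fun _ => 1) = cube d from rfl, cubeMeasure_cube,
      measure_univ, ENNReal.toReal_one]
  obtain ⟨hs, hmax, hstep⟩ := hsteps k hk
  obtain ⟨n, rfl⟩ := Nat.exists_eq_add_one_of_ne_zero (js k).pos.ne'
  have hbox := (hnodes k hk.le).box_subset_cube
  simp only [impDec_congr_ae hf] at hmax hpos ⊢
  rw [Gbar_congr hf ((eqOn_comp_clamp ρ).symm.mono hbox) ((eqOn_comp_clamp f).symm.mono hbox) hs]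
  exact toReal_measure_daughter_eq (continuous_comp_clamp hρ_cont)
    (fun x => hρ_pos _ (clamp_mem_cube x)) (continuous_comp_clamp hf_cont) (hnodes k hk.le) hs
    (isMaxOn_iff.2 hmax) (hpos k hk) hstep

end RegressionTree6
end
end

section
/- Let P_1, …, P_K be distinct real polynomials with zero constant term and let R_1, …, R_K be real polynomials. If Σ_{k=1}^K R_k(x)·e^{P_k(x)} = 0 for all x in some nonempty open interval of ℝ, then R_1 = R_2 = ⋯ = R_K = 0 (as polynomials). -/
/-!
By analyticity, the sum vanishes on all of `ℝ`. Among the `P_k`, pick one, `P_m`, that eventually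
dominates the others. Dividing the identity by `e^{P_m(x)}` leaves `R_m(x)` plus terms
`R_k(x) e^{-(P_m - P_k)(x)}`; since `P_m - P_k` has zero constant term and is nonzero, it is a
nonconstant polynomial tending to `+∞`, so these terms tend to `0`. Hence the polynomial `R_m`
tends to `0` at infinity, so `R_m = 0`, and induction on the number of terms finishes the proof.
-/

open Asymptotics Filter Polynomial Real Set Topology

namespace Polynomial

section OrderedField

variable {𝕜 : Type*} [NormedField 𝕜] [LinearOrder 𝕜] [IsStrictOrderedRing 𝕜] [OrderTopology 𝕜]

theorem leadingCoeff_nonneg_iff_eventually_nonneg (P : 𝕜[X]) :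
    0 ≤ P.leadingCoeff ↔ ∀ᶠ x in atTop, 0 ≤ P.eval x := by
  rcases le_or_gt P.degree 0 with hdeg | hdeg
  · rw [eq_C_of_degree_le_zero hdeg]
    simp only [leadingCoeff_C, eval_C, eventually_const]
  rcases le_or_gt 0 P.leadingCoeff with hlc | hlc
  · exact iff_of_true hlc ((P.tendsto_atTop_of_leadingCoeff_nonneg hdeg hlc).eventually_ge_atTop 0)
  · refine iff_of_false hlc.not_ge fun hnonneg => ?_
    have hneg := (P.tendsto_atBot_of_leadingCoeff_nonpos hdeg hlc.le).eventually_lt_atBot 0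
    obtain ⟨x, hx₁, hx₂⟩ := (hnonneg.and hneg).exists
    exact hx₁.not_gt hx₂

theorem eventually_eval_le_or_eventually_eval_ge (p q : 𝕜[X]) :
    (∀ᶠ x in atTop, p.eval x ≤ q.eval x) ∨ ∀ᶠ x in atTop, q.eval x ≤ p.eval x := by
  simp only [← sub_nonneg (b := p.eval _), ← sub_nonneg (b := q.eval _), ← eval_sub,
    ← leadingCoeff_nonneg_iff_eventually_nonneg]
  rw [← neg_sub q p, leadingCoeff_neg, neg_nonneg]
  exact le_total 0 _

theorem exists_mem_forall_eventually_eval_le {ι : Type*} {s : Finset ι} (hs : s.Nonempty)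
    (P : ι → 𝕜[X]) : ∃ m ∈ s, ∀ k ∈ s, ∀ᶠ x in atTop, (P k).eval x ≤ (P m).eval x := by
  induction hs using Finset.Nonempty.cons_induction with
  | singleton a => exact ⟨a, by simp⟩
  | cons a s ha hs ih =>
    obtain ⟨m, hm, hmax⟩ := ih
    simp only [Finset.mem_cons, exists_eq_or_imp, forall_eq_or_imp]
    rcases eventually_eval_le_or_eventually_eval_ge (P a) (P m) with ham | hma
    · exact .inr ⟨m, hm, ham, hmax⟩
    · refine .inl ⟨.of_forall fun _ => le_rfl, fun k hk => ?_⟩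
      filter_upwards [hmax k hk, hma] with x hkm hma using hkm.trans hma

end OrderedField

theorem degree_pos_of_ne_zero_of_coeff_zero_eq_zero {R : Type*} [Semiring R] {P : R[X]} (hP : P ≠ 0)
    (h0 : P.coeff 0 = 0) : 0 < P.degree := by
  by_contra! hdeg
  exact hP (by rw [eq_C_of_degree_le_zero hdeg, h0, map_zero])

theorem tendsto_eval_mul_exp_neg_eval_atTop (R Q : ℝ[X]) (hQ : 0 < Q.degree)
    (hlc : 0 ≤ Q.leadingCoeff) :
    Tendsto (fun x => R.eval x * exp (-Q.eval x)) atTop (𝓝 0) := by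
  have hdeg : R.degree ≤ (Q ^ R.natDegree).degree := by
    rw [degree_eq_natDegree (pow_ne_zero _ (ne_zero_of_degree_gt hQ)), natDegree_pow]
    exact degree_le_natDegree.trans <| by
      exact_mod_cast Nat.le_mul_of_pos_right _ (natDegree_pos_iff_degree_pos.2 hQ)
  have hR : (R.eval ·) =O[atTop] fun x => Q.eval x ^ R.natDegree := by
    simpa using R.isBigO_atTop_of_degree_le _ hdeg
  have hQ_top := Q.tendsto_atTop_of_leadingCoeff_nonneg hQ hlc
  exact (hR.mul (isBigO_refl _ _)).trans_tendsto
    ((tendsto_pow_mul_exp_neg_atTop_nhds_zero _).comp hQ_top)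

theorem sum_eval_mul_exp_eval_eq_exp_mul {ι : Type*} [DecidableEq ι] {s : Finset ι} {m : ι}
    (hm : m ∈ s) (P R : ι → ℝ[X]) (x : ℝ) :
    ∑ k ∈ s, (R k).eval x * exp ((P k).eval x) = exp ((P m).eval x) *
      ((R m).eval x + ∑ k ∈ s.erase m, (R k).eval x * exp (-(P m - P k).eval x)) := by
  rw [← Finset.add_sum_erase _ _ hm, mul_add, Finset.mul_sum, mul_comm]
  congr 1
  refine Finset.sum_congr rfl fun k _ => ?_
  rw [mul_left_comm, ← exp_add, eval_sub]
  ring_nf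

theorem eq_zero_of_sum_eval_mul_exp_eval_eventually_eq_zero_of_dominant {ι : Type*}
    [DecidableEq ι] {s : Finset ι} {m : ι} (hm : m ∈ s) (P R : ι → ℝ[X])
    (hP0 : ∀ k ∈ s, (P k).coeff 0 = 0) (hP : InjOn P s)
    (hmax : ∀ k ∈ s, ∀ᶠ x in atTop, (P k).eval x ≤ (P m).eval x)
    (h : ∀ᶠ x in atTop, ∑ k ∈ s, (R k).eval x * exp ((P k).eval x) = 0) :
    R m = 0 := by
  have hdecay : Tendsto (fun x => ∑ k ∈ s.erase m, (R k).eval x * exp (-(P m - P k).eval x))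
      atTop (𝓝 0) := by
    rw [← Finset.sum_const_zero (s := s.erase m)]
    refine tendsto_finsetSum _ fun k hk => ?_
    obtain ⟨hkm, hk⟩ := Finset.mem_erase.1 hk
    refine tendsto_eval_mul_exp_neg_eval_atTop _ _ ?_ ?_
    · refine degree_pos_of_ne_zero_of_coeff_zero_eq_zero
        (sub_ne_zero.2 fun he => hkm (hP hk hm he.symm)) ?_
      rw [coeff_sub, hP0 m hm, hP0 k hk, sub_zero]
    · rw [leadingCoeff_nonneg_iff_eventually_nonneg]
      filter_upwards [hmax k hk] with x hx
      rwa [eval_sub, sub_nonneg]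
  have hlim : Tendsto (R m).eval atTop (𝓝 0) := by
    rw [← neg_zero]
    refine hdecay.neg.congr' ?_
    filter_upwards [h] with x hx
    rw [sum_eval_mul_exp_eval_eq_exp_mul hm, mul_eq_zero] at hx
    exact (eq_neg_of_add_eq_zero_left (hx.resolve_left (exp_ne_zero _))).symm
  exact leadingCoeff_eq_zero.1 ((R m).tendsto_nhds_iff.1 hlim).1

theorem eq_zero_of_sum_eval_mul_exp_eval_eventually_eq_zero {ι : Type*} (s : Finset ι)
    (P R : ι → ℝ[X]) (hP0 : ∀ k ∈ s, (P k).coeff 0 = 0) (hP : InjOn P s)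
    (h : ∀ᶠ x in atTop, ∑ k ∈ s, (R k).eval x * exp ((P k).eval x) = 0) :
    ∀ k ∈ s, R k = 0 := by
  classical
  induction s using Finset.strongInduction with
  | H s ih =>
    rcases s.eq_empty_or_nonempty with rfl | hs
    · simp
    obtain ⟨m, hm, hmax⟩ := exists_mem_forall_eventually_eval_le hs P
    have hRm : R m = 0 :=
      eq_zero_of_sum_eval_mul_exp_eval_eventually_eq_zero_of_dominant hm P R hP0 hP hmax h
    have hrest : ∀ k ∈ s.erase m, R k = 0 := by
      refine ih _ (Finset.erase_ssubset hm) (fun k hk => hP0 k (Finset.mem_of_mem_erase hk))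
        (hP.mono (Finset.erase_subset m s)) ?_
      filter_upwards [h] with x hx
      rwa [← Finset.add_sum_erase _ _ hm, hRm, eval_zero, zero_mul, zero_add] at hx
    intro k hk
    by_cases hkm : k = m
    · exact hkm ▸ hRm
    · exact hrest k (Finset.mem_erase.2 ⟨hkm, hk⟩)

theorem analyticOnNhd_sum_eval_mul_exp_eval {ι : Type*} (s : Finset ι) (P R : ι → ℝ[X]) :
    AnalyticOnNhd ℝ (fun x => ∑ k ∈ s, (R k).eval x * exp ((P k).eval x)) univ :=
  Finset.analyticOnNhd_fun_sum s fun k _ =>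
    (AnalyticOnNhd.eval_polynomial (R k)).mul (AnalyticOnNhd.eval_polynomial (P k)).rexp

end Polynomial

/-- **linear independence of exponential polynomials.** If `P₁, …, P_K` are
distinct real polynomials with zero constant term, `R₁, …, R_K` are real polynomials, and
`Σ_k R_k(x)·e^{P_k(x)} = 0` on a nonempty open interval, then every `R_k` is the zero
polynomial. -/
theorem exp_poly_linear_independence (K : ℕ)
    (P R : Fin K → Polynomial ℝ)
    (hP0 : ∀ k, (P k).coeff 0 = 0)
    (hPdist : ∀ k l, k ≠ l → P k ≠ P l)
    (a b : ℝ) (hab : a < b)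
    (hzero : ∀ x ∈ Set.Ioo a b,
      ∑ k, (R k).eval x * Real.exp ((P k).eval x) = 0) :
    ∀ k, R k = 0 := by
  obtain ⟨c, hc⟩ := nonempty_Ioo.2 hab
  have hvanish : EqOn (fun x => ∑ k, (R k).eval x * exp ((P k).eval x)) 0 univ :=
    (analyticOnNhd_sum_eval_mul_exp_eval _ P R).eqOn_zero_of_preconnected_of_eventuallyEq_zero
      isPreconnected_univ (mem_univ c) (eventually_of_mem (isOpen_Ioo.mem_nhds hc) hzero)
  intro k
  exact eq_zero_of_sum_eval_mul_exp_eval_eventually_eq_zero Finset.univ P R (fun k _ => hP0 k)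
    (fun k _ l _ => not_imp_not.1 (hPdist k l)) (.of_forall fun x => hvanish (mem_univ x)) k
    (Finset.mem_univ k)
end

section
/- For every integer R ≥ 1, define I_R : ℝ → ℝ by I_R(δ) = ∫_0^1 ( (∫_0^s (u − δ)^R du) − s·(∫_0^1 (u − δ)^R du) )² / (s(1 − s)) ds. Then I_R attains its infimum over ℝ at δ = 1/2 (that is, I_R(δ) ≥ I_R(1/2) for every δ ∈ ℝ), and I_R(1/2) > 0. -/
/-!
Write `E_p(s) = ∫₀ˢ p - s ∫₀¹ p`, so that `I_R(δ) = ∫₀¹ E_p² / (s(1-s))` for `p = (X - δ)^R`.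
Expand `p = ∑ c_k L_k` in the shifted Legendre polynomials `L_k = D^k (X(1-X))^k`. The primitive
`D^(k-1) (X(1-X))^k` of `L_k` (`k ≥ 1`) vanishes at `0` and `1`, hence equals `X(1-X) Q_(k-1)`,
and `E_p = X(1-X) ∑_{k ≥ 1} c_k Q_(k-1)`. Integration by parts shows that the `Q_j` are orthogonal
for the weight `X(1-X)`, so `I_R(δ) = ∑_{k ≥ 1} c_k² ‖Q_(k-1)‖²`. By Rodrigues' formula
`c_k ∝ ∫₀¹ (s-δ)^(R-k) (s(1-s))^k ds`; expanding `(s-δ)^(R-k)` around `1/2`, the odd moments of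
the symmetric weight `(s(1-s))^k` vanish and the even ones are nonnegative, so `c_k²` is smallest
at `δ = 1/2`. The top coefficient `c_R ∝ ∫₀¹ (s(1-s))^R ds` is nonzero, whence `I_R(1/2) > 0`.
-/

open Polynomial Set

noncomputable section

section Orthogonal

variable {R M ι : Type*} [CommRing R] [AddCommGroup M] [Module R M]
  {B : M →ₗ[R] M →ₗ[R] R} {v : ι → M}

theorem LinearMap.IsOrthoᵢ.apply_sum_smul_left [DecidableEq ι] (hB : B.IsOrthoᵢ v)
    (s : Finset ι) (c : ι → R) {j : ι} (hj : j ∈ s) :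
    B (∑ i ∈ s, c i • v i) (v j) = c j * B (v j) (v j) := by
  simp only [map_sum, map_smul, LinearMap.sum_apply, LinearMap.smul_apply, smul_eq_mul]
  exact Finset.sum_eq_single_of_mem j hj fun i _ hij => by rw [hB hij, mul_zero]

theorem LinearMap.IsOrthoᵢ.apply_sum_smul_sum_smul [DecidableEq ι] (hB : B.IsOrthoᵢ v)
    (s : Finset ι) (c : ι → R) :
    B (∑ i ∈ s, c i • v i) (∑ i ∈ s, c i • v i) = ∑ i ∈ s, c i ^ 2 * B (v i) (v i) := by
  rw [map_sum]
  refine Finset.sum_congr rfl fun j hj => ?_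
  rw [map_smul, hB.apply_sum_smul_left s c hj, smul_eq_mul]
  ring

end Orthogonal

namespace Polynomial

theorem natDegree_iterate_derivative_eq {R : Type*} [Semiring R] [IsAddTorsionFree R]
    (p : R[X]) (k : ℕ) : (derivative^[k] p).natDegree = p.natDegree - k := by
  induction k with
  | zero => rfl
  | succ k ih => rw [Function.iterate_succ_apply', natDegree_derivative, ih, Nat.sub_sub]

theorem iterate_derivative_ne_zero {R : Type*} [Semiring R] [IsAddTorsionFree R]
    {p : R[X]} (hp : p ≠ 0) {k : ℕ} (hk : k ≤ p.natDegree) : derivative^[k] p ≠ 0 := by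
  induction k with
  | zero => exact hp
  | succ k ih =>
    rw [Function.iterate_succ_apply', derivative_ne_zero, natDegree_iterate_derivative_eq]
    omega

end Polynomial

namespace IntegratedImpurity

def unitIntegral : ℝ[X] →ₗ[ℝ] ℝ where
  toFun p := ∫ x in (0 : ℝ)..1, p.eval x
  map_add' p q := by
    simp only [eval_add]
    exact intervalIntegral.integral_add (p.continuous.intervalIntegrable _ _)
      (q.continuous.intervalIntegrable _ _)
  map_smul' c p := by simp [intervalIntegral.integral_const_mul]

theorem unitIntegral_apply (p : ℝ[X]) : unitIntegral p = ∫ x in (0 : ℝ)..1, p.eval x := rfl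

theorem unitIntegral_C_mul (c : ℝ) (p : ℝ[X]) : unitIntegral (C c * p) = c * unitIntegral p := by
  rw [C_mul', map_smul, smul_eq_mul]

theorem integral_eval_derivative (p : ℝ[X]) (a b : ℝ) :
    ∫ x in a..b, (derivative p).eval x = p.eval b - p.eval a :=
  intervalIntegral.integral_eq_sub_of_hasDerivAt (fun x _ => p.hasDerivAt x)
    ((derivative p).continuous.intervalIntegrable _ _)

theorem unitIntegral_derivative_mul (p q : ℝ[X]) :
    unitIntegral (derivative p * q) =
      (p * q).eval 1 - (p * q).eval 0 - unitIntegral (p * derivative q) := by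
  rw [← integral_eval_derivative, ← unitIntegral_apply, derivative_mul, map_add]
  ring

theorem unitIntegral_comp_one_sub (p : ℝ[X]) : unitIntegral (p.comp (1 - X)) = unitIntegral p := by
  simpa [unitIntegral_apply] using
    intervalIntegral.integral_comp_sub_left (a := 0) (b := 1) (fun x => p.eval x) 1

theorem unitIntegral_nonneg {p : ℝ[X]} (hp : ∀ x ∈ Icc (0 : ℝ) 1, 0 ≤ p.eval x) :
    0 ≤ unitIntegral p :=
  intervalIntegral.integral_nonneg zero_le_one hp

theorem unitIntegral_pos {p : ℝ[X]} (hp0 : p ≠ 0) (hp : ∀ x ∈ Icc (0 : ℝ) 1, 0 ≤ p.eval x) :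
    0 < unitIntegral p := by
  obtain ⟨c, hc, hroot⟩ := (Icc_infinite zero_lt_one).exists_notMem_finset p.roots.toFinset
  have hc0 : p.eval c ≠ 0 := fun h => hroot (by simpa [hp0] using h)
  exact intervalIntegral.integral_pos zero_lt_one p.continuous.continuousOn
    (fun x hx => hp x (Ioc_subset_Icc_self hx)) ⟨c, hc, (hp c hc).lt_of_ne' hc0⟩

theorem unitIntegral_iterate_derivative_mul {w : ℝ[X]} {n : ℕ}
    (h0 : ∀ i < n, (derivative^[i] w).eval 0 = 0) (h1 : ∀ i < n, (derivative^[i] w).eval 1 = 0)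
    (q : ℝ[X]) :
    unitIntegral (derivative^[n] w * q) = (-1) ^ n * unitIntegral (w * derivative^[n] q) := by
  induction n generalizing q with
  | zero => simp
  | succ n ih =>
    rw [Function.iterate_succ_apply', unitIntegral_derivative_mul, eval_mul, eval_mul,
      h0 n n.lt_succ_self, h1 n n.lt_succ_self,
      ih (fun i hi => h0 i (by omega)) (fun i hi => h1 i (by omega)),
      ← Function.iterate_succ_apply derivative]
    ring

def weightedInner (w : ℝ[X]) : ℝ[X] →ₗ[ℝ] ℝ[X] →ₗ[ℝ] ℝ :=
  LinearMap.mk₂ ℝ (fun p q => unitIntegral (w * p * q))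
    (fun _ _ _ => by rw [mul_add, add_mul, map_add])
    (fun _ _ _ => by rw [mul_smul_comm, smul_mul_assoc, map_smul])
    (fun _ _ _ => by rw [mul_add, map_add])
    (fun _ _ _ => by rw [mul_smul_comm, map_smul])

theorem weightedInner_apply (w p q : ℝ[X]) : weightedInner w p q = unitIntegral (w * p * q) := rfl

theorem weightedInner_comm (w p q : ℝ[X]) : weightedInner w p q = weightedInner w q p := by
  simp only [weightedInner_apply, mul_right_comm]

theorem weightedInner_self_pos {w p : ℝ[X]} (hw0 : w ≠ 0) (hw : ∀ x ∈ Icc (0 : ℝ) 1, 0 ≤ w.eval x)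
    (hp : p ≠ 0) : 0 < weightedInner w p p :=
  unitIntegral_pos (mul_ne_zero (mul_ne_zero hw0 hp) hp) fun x hx => by
    simpa [mul_assoc] using mul_nonneg (hw x hx) (mul_self_nonneg (p.eval x))

theorem isOrthoᵢ_weightedInner_of_lt {w : ℝ[X]} {v : ℕ → ℝ[X]}
    (h : ∀ i j, i < j → weightedInner w (v i) (v j) = 0) : (weightedInner w).IsOrthoᵢ v := by
  intro i j hij
  rcases hij.lt_or_gt with hij | hij
  · exact h i j hij
  · exact (weightedInner_comm w _ _).trans (h j i hij)

theorem natDegree_X_mul_one_sub_X : (X * (1 - X) : ℝ[X]).natDegree = 2 := by compute_degree!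

theorem X_mul_one_sub_X_ne_zero : (X * (1 - X) : ℝ[X]) ≠ 0 :=
  ne_zero_of_natDegree_gt (n := 0) (by rw [natDegree_X_mul_one_sub_X]; norm_num)

def parabolaPow (k : ℕ) : ℝ[X] := (X * (1 - X)) ^ k

theorem natDegree_parabolaPow (k : ℕ) : (parabolaPow k).natDegree = 2 * k := by
  rw [parabolaPow, natDegree_pow, natDegree_X_mul_one_sub_X, mul_comm]

theorem parabolaPow_ne_zero (k : ℕ) : parabolaPow k ≠ 0 := pow_ne_zero k X_mul_one_sub_X_ne_zero

theorem parabolaPow_comp_one_sub (k : ℕ) : (parabolaPow k).comp (1 - X) = parabolaPow k := by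
  simp only [parabolaPow, pow_comp, mul_comp, X_comp, sub_comp, one_comp]
  ring

theorem eval_parabolaPow_nonneg (k : ℕ) {x : ℝ} (hx : x ∈ Icc (0 : ℝ) 1) :
    0 ≤ (parabolaPow k).eval x := by
  simp only [parabolaPow, eval_pow, eval_mul, eval_X, eval_sub, eval_one]
  exact pow_nonneg (mul_nonneg hx.1 (sub_nonneg.2 hx.2)) k

theorem eval_iterate_derivative_parabolaPow {i k : ℕ} (hik : i < k) {x : ℝ}
    (hx : x * (1 - x) = 0) : (derivative^[i] (parabolaPow k)).eval x = 0 := by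
  obtain ⟨c, hc⟩ := pow_sub_dvd_iterate_derivative_pow (X * (1 - X) : ℝ[X]) k i
  rw [parabolaPow, hc, eval_mul, eval_pow]
  simp [hx, Nat.sub_ne_zero_of_lt hik]

theorem unitIntegral_iterate_derivative_parabolaPow_mul {i k : ℕ} (hik : i ≤ k) (q : ℝ[X]) :
    unitIntegral (derivative^[i] (parabolaPow k) * q) =
      (-1) ^ i * unitIntegral (parabolaPow k * derivative^[i] q) :=
  unitIntegral_iterate_derivative_mul
    (fun j hj => eval_iterate_derivative_parabolaPow (hj.trans_le hik) (by simp))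
    (fun j hj => eval_iterate_derivative_parabolaPow (hj.trans_le hik) (by simp)) q

theorem unitIntegral_iterate_derivative_parabolaPow_mul_eq_zero {i k : ℕ} (hik : i ≤ k)
    {q : ℝ[X]} (hq : q.natDegree < i) : unitIntegral (derivative^[i] (parabolaPow k) * q) = 0 := by
  rw [unitIntegral_iterate_derivative_parabolaPow_mul hik, iterate_derivative_eq_zero hq,
    mul_zero, map_zero, mul_zero]

-- `k! •` Mathlib's `shiftedLegendre k`, by Rodrigues' formula.
def legendre (k : ℕ) : ℝ[X] := derivative^[k] (parabolaPow k)

theorem natDegree_legendre (k : ℕ) : (legendre k).natDegree = k := by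
  rw [legendre, natDegree_iterate_derivative_eq, natDegree_parabolaPow]
  omega

theorem legendre_ne_zero (k : ℕ) : legendre k ≠ 0 :=
  iterate_derivative_ne_zero (parabolaPow_ne_zero k) (by rw [natDegree_parabolaPow]; omega)

def legendreSequence : Polynomial.Sequence ℝ where
  elems' := legendre
  degree_eq' k := by rw [degree_eq_natDegree (legendre_ne_zero k), natDegree_legendre]

theorem isOrthoᵢ_legendre : (weightedInner 1).IsOrthoᵢ legendre :=
  isOrthoᵢ_weightedInner_of_lt fun i j hij => by
    rw [weightedInner_apply, one_mul, mul_comm, legendre]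
    exact unitIntegral_iterate_derivative_parabolaPow_mul_eq_zero le_rfl
      (by rwa [natDegree_legendre])

theorem weightedInner_legendre_self_pos (k : ℕ) : 0 < weightedInner 1 (legendre k) (legendre k) :=
  weightedInner_self_pos one_ne_zero (fun _ _ => by simp) (legendre_ne_zero k)

theorem exists_eq_sum_smul_legendre {p : ℝ[X]} {n : ℕ} (hp : p.natDegree ≤ n) :
    ∃ c : ℕ → ℝ, p = ∑ k ∈ Finset.range (n + 1), c k • legendre k := by
  have hspan : p ∈ Submodule.span ℝ (legendreSequence '' Iic n) := by
    rw [legendreSequence.span_degreeLE fun k _ =>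
      (leadingCoeff_ne_zero.2 (legendreSequence.ne_zero k)).isUnit,
      mem_degreeLE]
    exact degree_le_of_natDegree_le hp
  obtain ⟨l, hl, rfl⟩ := (Finsupp.mem_span_image_iff_linearCombination ℝ).1 hspan
  have hsupp : l.support ⊆ Finset.range (n + 1) := fun k hk => by
    simpa [Nat.lt_succ_iff] using hl hk
  exact ⟨l, Finsupp.sum_of_support_subset l hsupp _ fun _ _ => zero_smul _ _⟩

def legendreCoeff (p : ℝ[X]) (k : ℕ) : ℝ :=
  weightedInner 1 p (legendre k) / weightedInner 1 (legendre k) (legendre k)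

theorem eq_sum_legendreCoeff_smul {p : ℝ[X]} {n : ℕ} (hp : p.natDegree ≤ n) :
    p = ∑ k ∈ Finset.range (n + 1), legendreCoeff p k • legendre k := by
  obtain ⟨c, hc⟩ := exists_eq_sum_smul_legendre hp
  conv_lhs => rw [hc]
  refine Finset.sum_congr rfl fun k hk => ?_
  rw [legendreCoeff, hc, isOrthoᵢ_legendre.apply_sum_smul_left _ _ hk,
    mul_div_cancel_right₀ _ (weightedInner_legendre_self_pos k).ne']

def legendrePrimitive (k : ℕ) : ℝ[X] := derivative^[k] (parabolaPow (k + 1))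

theorem derivative_legendrePrimitive (k : ℕ) :
    derivative (legendrePrimitive k) = legendre (k + 1) :=
  (Function.iterate_succ_apply' derivative k _).symm

-- A multiple of the Jacobi polynomial `P_k^(1,1)(2x - 1)`. The division is exact because
-- `legendrePrimitive k` vanishes at `0` and `1`.
def jacobi (k : ℕ) : ℝ[X] := legendrePrimitive k / (X * (1 - X))

theorem X_mul_one_sub_X_mul_jacobi (k : ℕ) : X * (1 - X) * jacobi k = legendrePrimitive k := by
  refine EuclideanDomain.mul_div_cancel' X_mul_one_sub_X_ne_zero ?_
  simpa [legendrePrimitive, parabolaPow] using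
    pow_sub_dvd_iterate_derivative_pow (X * (1 - X) : ℝ[X]) (k + 1) k

theorem legendrePrimitive_ne_zero (k : ℕ) : legendrePrimitive k ≠ 0 :=
  iterate_derivative_ne_zero (parabolaPow_ne_zero _) (by rw [natDegree_parabolaPow]; omega)

theorem jacobi_ne_zero (k : ℕ) : jacobi k ≠ 0 :=
  right_ne_zero_of_mul (X_mul_one_sub_X_mul_jacobi k ▸ legendrePrimitive_ne_zero k)

theorem natDegree_jacobi (k : ℕ) : (jacobi k).natDegree = k := by
  have h := congr_arg natDegree (X_mul_one_sub_X_mul_jacobi k)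
  rw [natDegree_mul X_mul_one_sub_X_ne_zero (jacobi_ne_zero k), natDegree_X_mul_one_sub_X,
    legendrePrimitive, natDegree_iterate_derivative_eq, natDegree_parabolaPow] at h
  omega

theorem isOrthoᵢ_jacobi : (weightedInner (X * (1 - X))).IsOrthoᵢ jacobi :=
  isOrthoᵢ_weightedInner_of_lt fun i j hij => by
    rw [weightedInner_apply, mul_right_comm, X_mul_one_sub_X_mul_jacobi, legendrePrimitive]
    exact unitIntegral_iterate_derivative_parabolaPow_mul_eq_zero j.le_succ
      (by rwa [natDegree_jacobi])

theorem weightedInner_jacobi_self_pos (k : ℕ) :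
    0 < weightedInner (X * (1 - X)) (jacobi k) (jacobi k) :=
  weightedInner_self_pos X_mul_one_sub_X_ne_zero
    (fun x hx => by simpa [parabolaPow] using eval_parabolaPow_nonneg 1 hx) (jacobi_ne_zero k)

def impurity (p : ℝ[X]) : ℝ :=
  ∫ s in (0 : ℝ)..1,
    ((∫ u in (0 : ℝ)..s, p.eval u) - s * ∫ u in (0 : ℝ)..1, p.eval u) ^ 2 / (s * (1 - s))

theorem impurity_derivative_X_mul_one_sub_X_mul (a : ℝ) (q : ℝ[X]) :
    impurity (derivative (C a * X + X * (1 - X) * q)) = weightedInner (X * (1 - X)) q q := by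
  have hbridge : ∀ s : ℝ, (∫ u in (0 : ℝ)..s, (derivative (C a * X + X * (1 - X) * q)).eval u) -
      s * ∫ u in (0 : ℝ)..1, (derivative (C a * X + X * (1 - X) * q)).eval u =
      s * (1 - s) * q.eval s := fun s => by
    simp only [integral_eval_derivative, eval_add, eval_mul, eval_C, eval_X, eval_sub, eval_one]
    ring
  simp_rw [impurity, hbridge, weightedInner_apply, unitIntegral_apply]
  refine intervalIntegral.integral_congr fun s _ => ?_
  rcases eq_or_ne (s * (1 - s)) 0 with hs | hs
  · -- at `s = 0, 1` the left integrand is `0 / 0 = 0`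
    simp [hs]
  · simp only [eval_mul, eval_X, eval_sub, eval_one]
    field_simp

theorem sum_smul_legendre_eq_derivative (c : ℕ → ℝ) (n : ℕ) :
    ∑ k ∈ Finset.range (n + 1), c k • legendre k =
      derivative (C (c 0) * X + X * (1 - X) * ∑ k ∈ Finset.range n, c (k + 1) • jacobi k) := by
  simp only [Finset.sum_range_succ', Finset.mul_sum, mul_smul_comm, X_mul_one_sub_X_mul_jacobi,
    derivative_add, map_sum, map_smul, derivative_legendrePrimitive, derivative_C_mul_X]
  simp [legendre, parabolaPow, add_comm, ← C_mul']

theorem impurity_sum_smul_legendre (c : ℕ → ℝ) (n : ℕ) :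
    impurity (∑ k ∈ Finset.range (n + 1), c k • legendre k) =
      ∑ k ∈ Finset.range n, c (k + 1) ^ 2 * weightedInner (X * (1 - X)) (jacobi k) (jacobi k) := by
  rw [sum_smul_legendre_eq_derivative, impurity_derivative_X_mul_one_sub_X_mul,
    isOrthoᵢ_jacobi.apply_sum_smul_sum_smul]

theorem impurity_eq_sum_legendreCoeff {p : ℝ[X]} {n : ℕ} (hp : p.natDegree ≤ n) :
    impurity p = ∑ k ∈ Finset.range n,
      legendreCoeff p (k + 1) ^ 2 * weightedInner (X * (1 - X)) (jacobi k) (jacobi k) := by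
  conv_lhs => rw [eq_sum_legendreCoeff_smul hp]
  exact impurity_sum_smul_legendre _ n

section Moments

variable {w : ℝ[X]}

theorem unitIntegral_X_sub_half_pow_mul_of_odd (hw : w.comp (1 - X) = w) {m : ℕ} (hm : Odd m) :
    unitIntegral ((X - C (1 / 2)) ^ m * w) = 0 := by
  have hflip : ((X - C (1 / 2)) ^ m * w).comp (1 - X) = -((X - C (1 / 2)) ^ m * w) := by
    have hreflect : (1 - X - C (1 / 2) : ℝ[X]) = -(X - C (1 / 2)) := by
      rw [show (1 : ℝ[X]) = C (1 / 2) + C (1 / 2) by rw [← C_add]; norm_num]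
      ring
    rw [mul_comp, hw, pow_comp, sub_comp, X_comp, C_comp, hreflect, hm.neg_pow, neg_mul]
  have h := unitIntegral_comp_one_sub ((X - C (1 / 2)) ^ m * w)
  rw [hflip, map_neg] at h
  linarith

theorem unitIntegral_X_sub_half_pow_mul_nonneg_of_even (hw : ∀ x ∈ Icc (0 : ℝ) 1, 0 ≤ w.eval x)
    {m : ℕ} (hm : Even m) : 0 ≤ unitIntegral ((X - C (1 / 2)) ^ m * w) :=
  unitIntegral_nonneg fun x hx => by
    simpa using mul_nonneg (hm.pow_nonneg (x - 1 / 2)) (hw x hx)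

theorem unitIntegral_X_sub_C_pow_mul (w : ℝ[X]) (m : ℕ) (δ : ℝ) :
    unitIntegral ((X - C δ) ^ m * w) = ∑ i ∈ Finset.range (m + 1),
      (1 / 2 - δ) ^ (m - i) * m.choose i * unitIntegral ((X - C (1 / 2)) ^ i * w) := by
  rw [show (X - C δ : ℝ[X]) = (X - C (1 / 2)) + C (1 / 2 - δ) by rw [C_sub]; ring, add_pow,
    Finset.sum_mul, map_sum]
  refine Finset.sum_congr rfl fun i _ => ?_
  rw [← unitIntegral_C_mul]
  congr 1
  simp only [map_mul, map_pow, map_natCast]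
  ring

theorem sq_unitIntegral_X_sub_half_pow_mul_le (hsymm : w.comp (1 - X) = w)
    (hw : ∀ x ∈ Icc (0 : ℝ) 1, 0 ≤ w.eval x) (m : ℕ) (δ : ℝ) :
    unitIntegral ((X - C (1 / 2)) ^ m * w) ^ 2 ≤ unitIntegral ((X - C δ) ^ m * w) ^ 2 := by
  rcases m.even_or_odd with hm | hm
  · have hterm : ∀ i ∈ Finset.range (m + 1),
        0 ≤ (1 / 2 - δ) ^ (m - i) * m.choose i * unitIntegral ((X - C (1 / 2)) ^ i * w) := by
      intro i hi
      rcases i.even_or_odd with hi' | hi'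
      · have hmi : Even (m - i) :=
          (Nat.even_sub (Finset.mem_range_succ_iff.1 hi)).2 (iff_of_true hm hi')
        exact mul_nonneg (mul_nonneg (hmi.pow_nonneg _) (Nat.cast_nonneg _))
          (unitIntegral_X_sub_half_pow_mul_nonneg_of_even hw hi')
      · rw [unitIntegral_X_sub_half_pow_mul_of_odd hsymm hi', mul_zero]
    have hle : unitIntegral ((X - C (1 / 2)) ^ m * w) ≤ unitIntegral ((X - C δ) ^ m * w) := by
      have := Finset.single_le_sum hterm (Finset.self_mem_range_succ m)
      rwa [Nat.sub_self, pow_zero, Nat.choose_self, Nat.cast_one, one_mul, one_mul,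
        ← unitIntegral_X_sub_C_pow_mul] at this
    exact pow_le_pow_left₀ (unitIntegral_X_sub_half_pow_mul_nonneg_of_even hw hm) hle 2
  · rw [unitIntegral_X_sub_half_pow_mul_of_odd hsymm hm]
    exact (sq_nonneg _).trans_eq' (zero_pow two_ne_zero).symm

end Moments

theorem weightedInner_X_sub_C_pow_legendre (δ : ℝ) (R k : ℕ) :
    weightedInner 1 ((X - C δ) ^ R) (legendre k) =
      (-1) ^ k * R.descFactorial k * unitIntegral ((X - C δ) ^ (R - k) * parabolaPow k) := by
  rw [weightedInner_apply, one_mul, mul_comm, legendre,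
    unitIntegral_iterate_derivative_parabolaPow_mul le_rfl, iterate_derivative_X_sub_pow,
    mul_smul_comm, map_nsmul, nsmul_eq_mul, mul_comm (parabolaPow k)]
  ring

theorem sq_legendreCoeff_X_sub_half_pow_le (R k : ℕ) (δ : ℝ) :
    legendreCoeff ((X - C (1 / 2)) ^ R) k ^ 2 ≤ legendreCoeff ((X - C δ) ^ R) k ^ 2 := by
  simp only [legendreCoeff, div_pow, weightedInner_X_sub_C_pow_legendre, mul_pow _ (unitIntegral _)]
  rw [div_le_div_iff_of_pos_right (pow_pos (weightedInner_legendre_self_pos k) 2)]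
  refine mul_le_mul_of_nonneg_left ?_ (sq_nonneg _)
  exact sq_unitIntegral_X_sub_half_pow_mul_le (parabolaPow_comp_one_sub k)
    (fun x hx => eval_parabolaPow_nonneg k hx) _ δ

theorem legendreCoeff_X_sub_half_pow_self_ne_zero (R : ℕ) :
    legendreCoeff ((X - C (1 / 2)) ^ R) R ≠ 0 := by
  rw [legendreCoeff, weightedInner_X_sub_C_pow_legendre, Nat.sub_self, pow_zero, one_mul,
    Nat.descFactorial_self]
  refine div_ne_zero (mul_ne_zero (mul_ne_zero (by simp) (by positivity)) ?_)
    (weightedInner_legendre_self_pos R).ne'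
  exact (unitIntegral_pos (parabolaPow_ne_zero R) fun x hx => eval_parabolaPow_nonneg R hx).ne'

end IntegratedImpurity

open IntegratedImpurity

/-- For every integer `R ≥ 1`, the function
`I_R(δ) = ∫₀¹ ((∫₀ˢ (u−δ)^R du) − s·∫₀¹ (u−δ)^R du)² / (s(1−s)) ds`
attains its infimum over `ℝ` at `δ = 1/2`, and `I_R(1/2) > 0`. -/
theorem integrated_impurity_minimized_at_half (R : ℕ) (hR : 1 ≤ R)
    (I : ℝ → ℝ)
    (hI : ∀ δ, I δ = ∫ s in (0:ℝ)..1,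
      ((∫ u in (0:ℝ)..s, (u - δ) ^ R) - s * ∫ u in (0:ℝ)..1, (u - δ) ^ R) ^ 2
        / (s * (1 - s))) :
    (∀ δ, I (1 / 2) ≤ I δ) ∧ 0 < I (1 / 2) := by
  have hIδ : ∀ δ, I δ = ∑ k ∈ Finset.range R, legendreCoeff ((X - C δ) ^ R) (k + 1) ^ 2 *
      weightedInner (X * (1 - X)) (jacobi k) (jacobi k) := fun δ => by
    rw [← impurity_eq_sum_legendreCoeff (natDegree_pow_le.trans (by simp)), hI, impurity]
    simp
  refine ⟨fun δ => ?_, ?_⟩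
  · rw [hIδ, hIδ]
    exact Finset.sum_le_sum fun k _ => mul_le_mul_of_nonneg_right
      (sq_legendreCoeff_X_sub_half_pow_le R _ δ) (weightedInner_jacobi_self_pos k).le
  · obtain ⟨n, rfl⟩ := Nat.exists_eq_add_of_le' hR
    rw [hIδ]
    refine Finset.sum_pos'
      (fun k _ => mul_nonneg (sq_nonneg _) (weightedInner_jacobi_self_pos k).le)
      ⟨n, Finset.self_mem_range_succ n, ?_⟩
    exact mul_pos (sq_pos_of_ne_zero (legendreCoeff_X_sub_half_pow_self_ne_zero _))
      (weightedInner_jacobi_self_pos n)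
end
end
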